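/- arXiv:2407.14837 — 3 statements merged into one kernel-verified Lean document; each statement's English description precedes it below -/
import Mathlib

section
/- Let E be a homogeneous Moran set determined by a collection of closed intervals fulfilling the homogeneous Moran structure for the sequences {n_k} and {c_k}. If sup_{k≥1} n_k < +∞, then dim_A E = limsup_{l→∞} sup_{k≥1} ( log(n_{k+1}n_{k+2}⋯n_{k+l}) / (−log(c_{k+1}c_{k+2}⋯c_{k+l})) ). -/
open Metric Filter Set
open scoped ENNReal

/-- `coveringNumber r A` is the smallest number of balls of radius `r`
needed to cover `A` (as an extended nonnegative real, `⊤` if no finite cover exists). -/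
noncomputable def coveringNumber {X : Type*} [MetricSpace X] (r : ℝ) (A : Set X) : ℝ≥0∞ :=
  sInf {m : ℝ≥0∞ | ∃ S : Finset X, (S.card : ℝ≥0∞) = m ∧ A ⊆ ⋃ y ∈ S, Metric.ball y r}

/-- The Assouad dimension of a set `F` in a metric space. -/
noncomputable def assouadDim {X : Type*} [MetricSpace X] (F : Set X) : ℝ :=
  sInf {s : ℝ | 0 ≤ s ∧ ∃ b > (0 : ℝ), ∃ C > (0 : ℝ), ∀ r R : ℝ, 0 < r → r < R → R < b →
    ∀ x ∈ F, coveringNumber r (Metric.ball x R ∩ F) ≤ ENNReal.ofReal (C * (R / r) ^ s)}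

/-- A word `σ = σ₁σ₂⋯σₖ ∈ Ωₖ`: its `j`-th letter (0-indexed `j`) satisfies
`1 ≤ σⱼ₊₁ ≤ n (j+1)`. -/
def MoranWord (n : ℕ → ℕ) (σ : List ℕ) : Prop :=
  ∀ j, j < σ.length → 1 ≤ σ.getD j 0 ∧ σ.getD j 0 ≤ n (j + 1)

/-- A collection of closed intervals of `[0,1]` fulfilling the homogeneous Moran
structure for the sequences `{nₖ}` and `{cₖ}`. -/
structure HomMoranStructure (n : ℕ → ℕ) (c : ℕ → ℝ) where
  I : List ℕ → Set ℝ
  root : I [] = Set.Icc 0 1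
  isClosedInterval : ∀ σ, MoranWord n σ → ∃ x y : ℝ, x ≤ y ∧ I σ = Set.Icc x y
  subset : ∀ σ, MoranWord n σ → ∀ i, 1 ≤ i → i ≤ n (σ.length + 1) → I (σ ++ [i]) ⊆ I σ
  disj : ∀ σ, MoranWord n σ → ∀ i₁ i₂, 1 ≤ i₁ → i₁ < i₂ → i₂ ≤ n (σ.length + 1) →
    interior (I (σ ++ [i₁])) ∩ interior (I (σ ++ [i₂])) = ∅
  ratio : ∀ σ, MoranWord n σ → ∀ i, 1 ≤ i → i ≤ n (σ.length + 1) →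
    Metric.diam (I (σ ++ [i])) = c (σ.length + 1) * Metric.diam (I σ)

/-- The homogeneous Moran set `E = ⋂_{k≥1} ⋃_{σ∈Ωₖ} I_σ` determined by a
homogeneous Moran structure. -/
def moranSet {n : ℕ → ℕ} {c : ℕ → ℝ} (S : HomMoranStructure n c) : Set ℝ :=
  ⋂ k : ℕ, ⋃ σ : List ℕ, ⋃ _ : MoranWord n σ ∧ σ.length = k + 1, S.I σ

/-- `moranDelta c k = c₁c₂⋯cₖ`, with `moranDelta c 0 = 1`. -/
noncomputable def moranDelta (c : ℕ → ℝ) (k : ℕ) : ℝ :=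
  ∏ i ∈ Finset.Icc 1 k, c i

/-- `moranRatio n c k l = log(n_{k+1}⋯n_{k+l}) / (−log(c_{k+1}⋯c_{k+l}))`. -/
noncomputable def moranRatio (n : ℕ → ℕ) (c : ℕ → ℝ) (k l : ℕ) : ℝ :=
  Real.log (∏ i ∈ Finset.Icc (k + 1) (k + l), (n i : ℝ)) /
    (-Real.log (∏ i ∈ Finset.Icc (k + 1) (k + l), c i))

/-- Words with letter bounds shifted by `k`. -/
def MoranWordFrom (n : ℕ → ℕ) (k : ℕ) (τ : List ℕ) : Prop :=
  ∀ j, j < τ.length → 1 ≤ τ.getD j 0 ∧ τ.getD j 0 ≤ n (k + j + 1)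

lemma moranWord_iff_from {n : ℕ → ℕ} {σ : List ℕ} : MoranWord n σ ↔ MoranWordFrom n 0 σ := by
  simp [MoranWord, MoranWordFrom]

lemma mwf_nil {n : ℕ → ℕ} {k : ℕ} : MoranWordFrom n k [] := by
  intro j hj; simp at hj

lemma getD_append_length {τ : List ℕ} {i : ℕ} : (τ ++ [i]).getD τ.length 0 = i := by
  rw [List.getD_eq_getElem?_getD, List.getElem?_append_right (le_refl _), Nat.sub_self]
  rfl

lemma mwf_append_iff {n : ℕ → ℕ} {k : ℕ} {τ : List ℕ} {i : ℕ} :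
    MoranWordFrom n k (τ ++ [i]) ↔ MoranWordFrom n k τ ∧ 1 ≤ i ∧ i ≤ n (k + τ.length + 1) := by
  constructor
  · intro h
    refine ⟨fun j hj => ?_, ?_⟩
    · have := h j (by simp; omega)
      rwa [List.getD_append _ _ _ _ hj] at this
    · have := h τ.length (by simp)
      rwa [getD_append_length] at this
  · rintro ⟨h1, h2⟩ j hj
    simp at hj
    rcases lt_or_ge j τ.length with hj' | hj'
    · rw [List.getD_append _ _ _ _ hj']; exact h1 j hj'
    · have : j = τ.length := by omega
      subst this
      rw [List.getD_eq_getElem?_getD, List.getElem?_append_right (le_refl _), Nat.sub_self]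
      simpa using h2

lemma mwf_append {n : ℕ → ℕ} {k : ℕ} {σ τ : List ℕ} (hσ : MoranWordFrom n k σ)
    (hτ : MoranWordFrom n (k + σ.length) τ) : MoranWordFrom n k (σ ++ τ) := by
  intro j hj
  simp at hj
  rcases lt_or_ge j σ.length with hj' | hj'
  · rw [List.getD_append _ _ _ _ hj']; exact hσ j hj'
  · rw [List.getD_eq_getElem?_getD, List.getElem?_append_right hj']
    have := hτ (j - σ.length) (by omega)
    rw [List.getD_eq_getElem?_getD] at this
    have e : k + σ.length + (j - σ.length) = k + j := by omega
    rwa [e] at this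

lemma mwf_take {n : ℕ → ℕ} {k : ℕ} {σ : List ℕ} (hσ : MoranWordFrom n k σ) (m : ℕ) :
    MoranWordFrom n k (σ.take m) := by
  intro j hj
  simp at hj
  have := hσ j hj.2
  rwa [List.getD_eq_getElem?_getD, List.getElem?_take, if_pos hj.1,
    ← List.getD_eq_getElem?_getD]

lemma mwf_replicate_one {n : ℕ → ℕ} (hn : ∀ k, 1 ≤ k → 1 ≤ n k) (k m : ℕ) :
    MoranWordFrom n k (List.replicate m 1) := by
  intro j hj
  simp at hj
  rw [List.getD_eq_getElem?_getD, List.getElem?_replicate_of_lt hj]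
  exact ⟨le_refl _, hn _ (by omega)⟩

/-- The finset of words of length `l` with letter bounds shifted by `k`. -/
def wordFin (n : ℕ → ℕ) (k : ℕ) : ℕ → Finset (List ℕ)
  | 0 => {[]}
  | (l+1) => (wordFin n k l).biUnion
      (fun τ => (Finset.Icc 1 (n (k + l + 1))).image (fun i => τ ++ [i]))

lemma mem_wordFin {n : ℕ → ℕ} {k : ℕ} : ∀ {l : ℕ} {τ : List ℕ},
    τ ∈ wordFin n k l ↔ MoranWordFrom n k τ ∧ τ.length = l := by
  intro l
  induction l with
  | zero =>
    intro τ
    simp only [wordFin, Finset.mem_singleton, List.length_eq_zero_iff]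
    constructor
    · rintro rfl; exact ⟨mwf_nil, rfl⟩
    · rintro ⟨-, rfl⟩; rfl
  | succ l ih =>
    intro τ
    simp only [wordFin, Finset.mem_biUnion, Finset.mem_image, Finset.mem_Icc]
    constructor
    · rintro ⟨a, ha, i, hi, rfl⟩
      rcases ih.1 ha with ⟨h1, h2⟩
      refine ⟨mwf_append_iff.2 ⟨h1, by omega, by rw [h2]; omega⟩, by simp [h2]⟩
    · rintro ⟨h1, h2⟩
      have hτ : τ ≠ [] := by rintro rfl; simp at h2
      obtain ⟨a, i, rfl⟩ : ∃ a i, τ = a ++ [i] := ⟨τ.dropLast, τ.getLast hτ, by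
        simpa using (List.dropLast_append_getLast hτ).symm⟩
      have hal : a.length = l := by simp at h2; omega
      rcases mwf_append_iff.1 h1 with ⟨ha, hi1, hi2⟩
      exact ⟨a, ih.2 ⟨ha, hal⟩, i, ⟨hi1, by rwa [hal] at hi2⟩, rfl⟩

lemma card_wordFin {n : ℕ → ℕ} (hn : ∀ k, 1 ≤ k → 1 ≤ n k) (k : ℕ) : ∀ l : ℕ,
    (wordFin n k l).card = ∏ i ∈ Finset.Icc (k + 1) (k + l), n i := by
  intro l
  induction l with
  | zero => simp [wordFin]
  | succ l ih =>
    rw [wordFin, Finset.card_biUnion, show k + (l+1) = (k+l)+1 by ring,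
      Finset.prod_Icc_succ_top (by omega)]
    · have : ∀ τ ∈ wordFin n k l,
          ((Finset.Icc 1 (n (k + l + 1))).image (fun i => τ ++ [i])).card = n (k + l + 1) := by
        intro τ _
        rw [Finset.card_image_of_injective _ (fun a b hab => by simpa using hab)]
        simp [Nat.card_Icc]
      rw [Finset.sum_congr rfl this, Finset.sum_const, smul_eq_mul, ih]
    · intro a ha b hb hab
      simp only [Finset.disjoint_left, Finset.mem_image]
      rintro x ⟨i, -, rfl⟩ ⟨j, -, hj⟩
      exact hab (by simpa using congrArg List.dropLast hj.symm)

section Aux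

lemma mw_append_iff {n : ℕ → ℕ} {σ : List ℕ} {i : ℕ} :
    MoranWord n (σ ++ [i]) ↔ MoranWord n σ ∧ 1 ≤ i ∧ i ≤ n (σ.length + 1) := by
  rw [moranWord_iff_from, moranWord_iff_from, mwf_append_iff, Nat.zero_add]

lemma mw_take {n : ℕ → ℕ} {σ : List ℕ} (h : MoranWord n σ) (m : ℕ) :
    MoranWord n (σ.take m) :=
  moranWord_iff_from.2 (mwf_take (moranWord_iff_from.1 h) m)

lemma moranDelta_pos {c : ℕ → ℝ} (hc : ∀ k, 1 ≤ k → 0 < c k) (k : ℕ) :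
    0 < moranDelta c k :=
  Finset.prod_pos (fun i hi => hc i (Finset.mem_Icc.1 hi).1)

lemma moranDelta_succ (c : ℕ → ℝ) (k : ℕ) :
    moranDelta c (k + 1) = moranDelta c k * c (k + 1) := by
  rw [moranDelta, moranDelta, Finset.prod_Icc_succ_top (by omega)]

lemma moranDelta_add (c : ℕ → ℝ) (k l : ℕ) :
    moranDelta c (k + l) = moranDelta c k * ∏ i ∈ Finset.Icc (k + 1) (k + l), c i := by
  rw [moranDelta, moranDelta, Finset.Icc_add_one_left_eq_Ioc, show (1:ℕ) = 0 + 1 from rfl,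
    Finset.Icc_add_one_left_eq_Ioc, Finset.Icc_add_one_left_eq_Ioc,
    ← Finset.prod_Ioc_consecutive _ (Nat.zero_le k) (Nat.le_add_right k l)]

lemma c_lt_half {n : ℕ → ℕ} {c : ℕ → ℝ} (hn : ∀ k, 1 ≤ k → 2 ≤ n k)
    (hc : ∀ k, 1 ≤ k → 0 < c k) (hnc : ∀ k, 1 ≤ k → (n k : ℝ) * c k < 1)
    (k : ℕ) (hk : 1 ≤ k) : c k < 1 / 2 := by
  have h2 : (2 : ℝ) ≤ n k := by exact_mod_cast hn k hk
  have := hnc k hk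
  nlinarith [hc k hk]

section Structure

variable {n : ℕ → ℕ} {c : ℕ → ℝ}

lemma diam_I (S : HomMoranStructure n c) :
    ∀ σ, MoranWord n σ → Metric.diam (S.I σ) = moranDelta c σ.length := by
  intro σ
  induction σ using List.reverseRecOn with
  | nil =>
    intro _
    rw [S.root, Real.diam_Icc (by norm_num : (0:ℝ) ≤ 1)]
    simp [moranDelta]
  | append_singleton a i ih =>
    intro h
    rcases mw_append_iff.1 h with ⟨ha, h1, h2⟩
    rw [S.ratio a ha i h1 h2, ih ha, List.length_append, List.length_singleton,
      moranDelta_succ, mul_comm]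

lemma exists_leftEnd (S : HomMoranStructure n c) {σ : List ℕ} (hσ : MoranWord n σ) :
    ∃ x : ℝ, S.I σ = Set.Icc x (x + moranDelta c σ.length) := by
  obtain ⟨x, y, hxy, hI⟩ := S.isClosedInterval σ hσ
  have : Metric.diam (S.I σ) = y - x := by rw [hI, Real.diam_Icc hxy]
  rw [diam_I S σ hσ] at this
  exact ⟨x, by rw [hI, this]; congr 1; ring⟩

lemma I_subset_take (S : HomMoranStructure n c) :
    ∀ σ, MoranWord n σ → ∀ m, S.I σ ⊆ S.I (σ.take m) := by
  intro σ
  induction σ using List.reverseRecOn with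
  | nil => intro _ m; simp
  | append_singleton a i ih =>
    intro h m
    rcases mw_append_iff.1 h with ⟨ha, h1, h2⟩
    rcases le_or_gt m a.length with hm | hm
    · rw [List.take_append_of_le_length hm]
      exact subset_trans (S.subset a ha i h1 (by simpa using h2)) (ih ha m)
    · rw [List.take_of_length_le (by simp; omega)]

lemma I_subset_prefix (S : HomMoranStructure n c) {σ τ : List ℕ}
    (h : MoranWord n (σ ++ τ)) : S.I (σ ++ τ) ⊆ S.I σ := by
  have := I_subset_take S (σ ++ τ) h σ.length
  rwa [List.take_left] at this

lemma interior_disj_words (S : HomMoranStructure n c) :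
    ∀ σ, MoranWord n σ → ∀ τ, MoranWord n τ → σ.length = τ.length → σ ≠ τ →
      interior (S.I σ) ∩ interior (S.I τ) = ∅ := by
  intro σ
  induction σ using List.reverseRecOn with
  | nil =>
    intro _ τ _ hlen hne
    exact absurd (List.length_eq_zero_iff.1 hlen.symm).symm hne
  | append_singleton a i ih =>
    intro hσ τ hτ hlen hne
    have hτne : τ ≠ [] := by rintro rfl; simp at hlen
    obtain ⟨b, j, rfl⟩ : ∃ b j, τ = b ++ [j] :=
      ⟨τ.dropLast, τ.getLast hτne, by simpa using (List.dropLast_append_getLast hτne).symm⟩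
    rcases mw_append_iff.1 hσ with ⟨ha, hi1, hi2⟩
    rcases mw_append_iff.1 hτ with ⟨hb, hj1, hj2⟩
    have hlen' : a.length = b.length := by simp at hlen; omega
    by_cases hab : a = b
    · subst hab
      have hij : i ≠ j := fun h => hne (by rw [h])
      rcases lt_or_gt_of_ne hij with h | h
      · exact S.disj a ha i j hi1 h hj2
      · rw [Set.inter_comm]; exact S.disj a ha j i hj1 h (hlen' ▸ hi2)
    · have hd := ih ha b hb hlen' hab
      apply Set.eq_empty_of_subset_empty
      rw [← hd]
      exact Set.inter_subset_inter
        (interior_mono (S.subset a ha i hi1 hi2))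
        (interior_mono (S.subset b hb j hj1 hj2))

lemma nonempty_moranSet_inter (S : HomMoranStructure n c)
    (hn1 : ∀ k, 1 ≤ k → 1 ≤ n k) (hc : ∀ k, 1 ≤ k → 0 < c k)
    (σ : List ℕ) (hσ : MoranWord n σ) :
    (moranSet S ∩ S.I σ).Nonempty := by
  set t : ℕ → Set ℝ := fun j => S.I (σ ++ List.replicate j 1) with ht
  have hw : ∀ j, MoranWord n (σ ++ List.replicate j 1) := fun j =>
    moranWord_iff_from.2 (mwf_append (moranWord_iff_from.1 hσ) (mwf_replicate_one hn1 _ _))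
  have hIcc : ∀ j, ∃ x : ℝ, t j = Set.Icc x (x + moranDelta c (σ ++ List.replicate j 1).length) :=
    fun j => exists_leftEnd S (hw j)
  have hne : ∀ j, (t j).Nonempty := by
    intro j
    obtain ⟨x, hx⟩ := hIcc j
    rw [hx]
    exact Set.nonempty_Icc.2 (by linarith [le_of_lt (moranDelta_pos hc (σ ++ List.replicate j 1).length)])
  have hcl : ∀ j, IsClosed (t j) := by
    intro j; obtain ⟨x, hx⟩ := hIcc j; rw [hx]; exact isClosed_Icc
  have hcpt : IsCompact (t 0) := by
    obtain ⟨x, hx⟩ := hIcc 0; rw [hx]; exact isCompact_Icc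
  have hsub : ∀ j, t (j + 1) ⊆ t j := by
    intro j
    have e : σ ++ List.replicate (j+1) 1 = (σ ++ List.replicate j 1) ++ [1] := by
      rw [List.replicate_succ', List.append_assoc]
    rw [ht]
    simp only []
    rw [e]
    exact S.subset _ (hw j) 1 le_rfl (hn1 _ (by omega))
  obtain ⟨x, hx⟩ := IsCompact.nonempty_iInter_of_sequence_nonempty_isCompact_isClosed
    t hsub hne hcpt hcl
  have hxj : ∀ j, x ∈ t j := fun j => Set.mem_iInter.1 hx j
  refine ⟨x, ?_, by simpa [ht] using hxj 0⟩
  rw [moranSet, Set.mem_iInter]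
  intro k
  rw [Set.mem_iUnion]
  refine ⟨(σ ++ List.replicate (k+1) 1).take (k+1), Set.mem_iUnion.2 ?_⟩
  refine ⟨⟨mw_take (hw (k+1)) (k+1), by simp⟩, ?_⟩
  exact I_subset_take S _ (hw (k+1)) (k+1) (hxj (k+1))

end Structure
end Aux


section Counting

lemma card_le_of_sep {F : Finset ℝ} {u L δ : ℝ} (hδ : 0 < δ) (hL : 0 ≤ L)
    (hmem : ∀ a ∈ F, a ∈ Set.Icc u (u + L))
    (hsep : ∀ a ∈ F, ∀ b ∈ F, a ≠ b → δ ≤ |a - b|) :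
    (F.card : ℝ) ≤ L / δ + 1 := by
  classical
  have key : ∀ p q : ℝ, p ∈ F → q ∈ F → p < q → ⌊(p - u) / δ⌋₊ < ⌊(q - u) / δ⌋₊ := by
    intro p q hp hq hpq
    have hsep' : δ ≤ q - p := by
      have := hsep p hp q hq (ne_of_lt hpq)
      rwa [abs_sub_comm, abs_of_nonneg (by linarith)] at this
    have hup : u ≤ p := (hmem p hp).1
    have h1 : (p - u) / δ + 1 ≤ (q - u) / δ := by
      rw [← sub_nonneg]
      have e : (q - u) / δ - ((p - u) / δ + 1) = ((q - p) - δ) / δ := by field_simp; ring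
      rw [e]
      exact div_nonneg (by linarith) hδ.le
    calc ⌊(p - u) / δ⌋₊ < ⌊(p - u) / δ⌋₊ + 1 := Nat.lt_succ_self _
      _ = ⌊(p - u) / δ + 1⌋₊ := (Nat.floor_add_one (div_nonneg (by linarith) hδ.le)).symm
      _ ≤ ⌊(q - u) / δ⌋₊ := Nat.floor_le_floor h1
  have hinj : Set.InjOn (fun a => ⌊(a - u) / δ⌋₊) F := by
    intro a ha b hb hab
    by_contra hne
    rcases Ne.lt_or_gt hne with h | h
    · exact absurd hab (Nat.ne_of_lt (key a b ha hb h))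
    · exact absurd hab.symm (Nat.ne_of_lt (key b a hb ha h))
  have himg : F.image (fun a => ⌊(a - u) / δ⌋₊) ⊆ Finset.range (⌊L / δ⌋₊ + 1) := by
    intro m hm
    rcases Finset.mem_image.1 hm with ⟨a, ha, rfl⟩
    rw [Finset.mem_range, Nat.lt_succ_iff]
    apply Nat.floor_le_floor
    have h2 := (hmem a ha).2
    have h1 : a - u ≤ L := by linarith
    gcongr
  have hcard : F.card ≤ ⌊L / δ⌋₊ + 1 := by
    rw [← Finset.card_image_of_injOn hinj]
    exact le_trans (Finset.card_le_card himg) (by simp)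
  calc (F.card : ℝ) ≤ ((⌊L / δ⌋₊ + 1 : ℕ) : ℝ) := by exact_mod_cast hcard
    _ ≤ L / δ + 1 := by
        push_cast
        linarith [Nat.floor_le (by positivity : (0:ℝ) ≤ L / δ)]

lemma sep_of_disjoint_interiors {x y δ : ℝ} (hδ : 0 < δ) (hxy : x ≠ y)
    (hd : interior (Set.Icc x (x + δ)) ∩ interior (Set.Icc y (y + δ)) = ∅) :
    δ ≤ |x - y| := by
  rw [interior_Icc, interior_Icc] at hd
  by_contra hcon
  push_neg at hcon
  rw [abs_sub_lt_iff] at hcon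
  have hmem : (max x y + min x y + δ) / 2 ∈ Set.Ioo x (x + δ) ∩ Set.Ioo y (y + δ) := by
    rcases hxy.lt_or_gt with h | h
    · rw [max_eq_right h.le, min_eq_left h.le]
      exact ⟨⟨by linarith, by linarith [hcon.2]⟩, ⟨by linarith [hcon.2], by linarith⟩⟩
    · rw [max_eq_left h.le, min_eq_right h.le]
      exact ⟨⟨by linarith [hcon.1], by linarith⟩, ⟨by linarith, by linarith [hcon.1]⟩⟩
  rw [hd] at hmem
  exact hmem

/-- The left endpoint of a basic interval. -/
noncomputable def leftEnd {n : ℕ → ℕ} {c : ℕ → ℝ} (S : HomMoranStructure n c)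
    (σ : List ℕ) : ℝ := sInf (S.I σ)

lemma I_eq_Icc {n : ℕ → ℕ} {c : ℕ → ℝ} (S : HomMoranStructure n c)
    (hc : ∀ k, 1 ≤ k → 0 < c k) {σ : List ℕ} (hσ : MoranWord n σ) :
    S.I σ = Set.Icc (leftEnd S σ) (leftEnd S σ + moranDelta c σ.length) := by
  obtain ⟨x, hx⟩ := exists_leftEnd S hσ
  have hxle : leftEnd S σ = x := by
    rw [leftEnd, hx, csInf_Icc (by linarith [moranDelta_pos hc σ.length])]
  rw [hxle, hx]

lemma leftEnd_sep {n : ℕ → ℕ} {c : ℕ → ℝ} (S : HomMoranStructure n c)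
    (hc : ∀ k, 1 ≤ k → 0 < c k) {σ τ : List ℕ} (hσ : MoranWord n σ) (hτ : MoranWord n τ)
    (hlen : σ.length = τ.length) (hne : σ ≠ τ) :
    moranDelta c σ.length ≤ |leftEnd S σ - leftEnd S τ| := by
  have hδ := moranDelta_pos hc σ.length
  have hd := interior_disj_words S σ hσ τ hτ hlen hne
  rw [I_eq_Icc S hc hσ, I_eq_Icc S hc hτ, ← hlen] at hd
  refine sep_of_disjoint_interiors hδ ?_ hd
  intro heq
  rw [heq] at hd
  rw [interior_Icc, Set.inter_self] at hd
  exact (Set.nonempty_Ioo.2 (by linarith)).ne_empty hd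

/-- Counting basic intervals of level `k` that meet a set contained in `Icc u (u+L)`. -/
lemma card_words_meeting {n : ℕ → ℕ} {c : ℕ → ℝ} (S : HomMoranStructure n c)
    (hc : ∀ k, 1 ≤ k → 0 < c k) (k : ℕ) {J : Set ℝ} {u L : ℝ} (hL : 0 ≤ L)
    (hJ : J ⊆ Set.Icc u (u + L)) (F : Finset (List ℕ))
    (hF : ∀ σ ∈ F, MoranWord n σ ∧ σ.length = k ∧ (S.I σ ∩ J).Nonempty) :
    (F.card : ℝ) ≤ L / moranDelta c k + 2 := by
  classical
  set δ := moranDelta c k with hδdef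
  have hδ : 0 < δ := moranDelta_pos hc k
  have hinj : Set.InjOn (leftEnd S) F := by
    intro a ha b hb hab
    by_contra hne
    obtain ⟨hwa, hla, -⟩ := hF a ha
    obtain ⟨hwb, hlb, -⟩ := hF b hb
    have := leftEnd_sep S hc hwa hwb (hla.trans hlb.symm) hne
    rw [hab, sub_self, abs_zero, hla] at this
    linarith
  have hmem : ∀ a ∈ F.image (leftEnd S), a ∈ Set.Icc (u - δ) ((u - δ) + (L + δ)) := by
    intro a ha
    rcases Finset.mem_image.1 ha with ⟨σ, hσF, rfl⟩
    obtain ⟨hw, hl, z, hz1, hz2⟩ := hF σ hσF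
    rw [I_eq_Icc S hc hw, hl] at hz1
    have hz3 := hJ hz2
    constructor
    · have := hz1.2
      have := hz3.1
      simp only [hδdef]
      linarith
    · have := hz1.1
      have := hz3.2
      linarith
  have hsep : ∀ a ∈ F.image (leftEnd S), ∀ b ∈ F.image (leftEnd S), a ≠ b → δ ≤ |a - b| := by
    intro a ha b hb hab
    rcases Finset.mem_image.1 ha with ⟨σ, hσF, rfl⟩
    rcases Finset.mem_image.1 hb with ⟨τ, hτF, rfl⟩
    obtain ⟨hwσ, hlσ, -⟩ := hF σ hσF
    obtain ⟨hwτ, hlτ, -⟩ := hF τ hτF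
    have hne : σ ≠ τ := by rintro rfl; exact hab rfl
    have := leftEnd_sep S hc hwσ hwτ (hlσ.trans hlτ.symm) hne
    rwa [hlσ] at this
  have hcard := card_le_of_sep hδ (by linarith) hmem hsep
  rw [Finset.card_image_of_injOn hinj] at hcard
  calc (F.card : ℝ) ≤ (L + δ) / δ + 1 := hcard
    _ = L / δ + 2 := by field_simp; ring

lemma coveringNumber_le_card {X : Type*} [MetricSpace X] {r : ℝ} {A : Set X} (T : Finset X)
    (h : A ⊆ ⋃ y ∈ T, Metric.ball y r) : coveringNumber r A ≤ T.card :=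
  sInf_le ⟨T, rfl, h⟩

lemma le_coveringNumber {X : Type*} [MetricSpace X] {r : ℝ} {A : Set X} (m : ℝ≥0∞)
    (h : ∀ T : Finset X, A ⊆ ⋃ y ∈ T, Metric.ball y r → m ≤ T.card) :
    m ≤ coveringNumber r A :=
  le_sInf (by rintro x ⟨T, rfl, hT⟩; exact h T hT)

end Counting


section Upper

lemma mwf_drop {n : ℕ → ℕ} {k : ℕ} {σ : List ℕ} (h : MoranWordFrom n k σ) (j : ℕ) :
    MoranWordFrom n (k + j) (σ.drop j) := by
  intro i hi
  rw [List.length_drop] at hi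
  have := h (j + i) (by omega)
  rw [List.getD_eq_getElem?_getD, List.getElem?_drop, ← List.getD_eq_getElem?_getD]
  have e : k + (j + i) + 1 = k + j + i + 1 := by omega
  rwa [e] at this

lemma prod_n_le_pow {n : ℕ → ℕ} {M : ℕ} (hM : ∀ k, 1 ≤ k → n k ≤ M) (k l : ℕ) :
    ∏ i ∈ Finset.Icc (k + 1) (k + l), (n i : ℝ) ≤ (M : ℝ) ^ l := by
  calc ∏ i ∈ Finset.Icc (k + 1) (k + l), (n i : ℝ)
      ≤ ∏ _i ∈ Finset.Icc (k + 1) (k + l), (M : ℝ) :=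
        Finset.prod_le_prod (fun i _ => by positivity)
          (fun i hi => by exact_mod_cast hM i (by rcases Finset.mem_Icc.1 hi with ⟨h1, -⟩; omega))
    _ = (M : ℝ) ^ l := by rw [Finset.prod_const, Nat.card_Icc]; congr 1; omega

lemma one_le_prod_n {n : ℕ → ℕ} (hn : ∀ k, 1 ≤ k → 2 ≤ n k) (k l : ℕ) :
    (1 : ℝ) ≤ ∏ i ∈ Finset.Icc (k + 1) (k + l), (n i : ℝ) := by
  have h := Finset.prod_le_prod (s := Finset.Icc (k + 1) (k + l)) (f := fun _ => (1:ℝ))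
    (g := fun i => (n i : ℝ)) (by intros; norm_num)
    (fun i hi => by
      rw [Finset.mem_Icc] at hi
      have := hn i (by omega)
      show (1:ℝ) ≤ (n i : ℝ)
      exact_mod_cast le_trans one_le_two this)
  simpa using h

lemma prod_c_le_pow {n : ℕ → ℕ} {c : ℕ → ℝ} (hn : ∀ k, 1 ≤ k → 2 ≤ n k)
    (hc : ∀ k, 1 ≤ k → 0 < c k) (hnc : ∀ k, 1 ≤ k → (n k : ℝ) * c k < 1) (k l : ℕ) :
    ∏ i ∈ Finset.Icc (k + 1) (k + l), c i ≤ (1/2 : ℝ) ^ l := by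
  calc ∏ i ∈ Finset.Icc (k + 1) (k + l), c i
      ≤ ∏ _i ∈ Finset.Icc (k + 1) (k + l), (1/2 : ℝ) :=
        Finset.prod_le_prod
          (fun i hi => (hc i (by rcases Finset.mem_Icc.1 hi with ⟨h1, -⟩; omega)).le)
          (fun i hi => (c_lt_half hn hc hnc i
            (by rcases Finset.mem_Icc.1 hi with ⟨h1, -⟩; omega)).le)
    _ = (1/2 : ℝ) ^ l := by rw [Finset.prod_const, Nat.card_Icc]; congr 1; omega

lemma prod_c_pos {c : ℕ → ℝ} (hc : ∀ k, 1 ≤ k → 0 < c k) (k l : ℕ) :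
    0 < ∏ i ∈ Finset.Icc (k + 1) (k + l), c i :=
  Finset.prod_pos (fun i hi => hc i (by rcases Finset.mem_Icc.1 hi with ⟨h1, -⟩; omega))

lemma moranDelta_le_pow {n : ℕ → ℕ} {c : ℕ → ℝ} (hn : ∀ k, 1 ≤ k → 2 ≤ n k)
    (hc : ∀ k, 1 ≤ k → 0 < c k) (hnc : ∀ k, 1 ≤ k → (n k : ℝ) * c k < 1) (j : ℕ) :
    moranDelta c j ≤ (1/2 : ℝ) ^ j := by
  have := prod_c_le_pow hn hc hnc 0 j
  simpa [moranDelta] using this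

lemma moranDelta_zero (c : ℕ → ℝ) : moranDelta c 0 = 1 := by simp [moranDelta]

/-- Conversion: `moranRatio ≤ s` gives a product bound. -/
lemma prod_le_of_ratio_le {n : ℕ → ℕ} {c : ℕ → ℝ} (hn : ∀ k, 1 ≤ k → 2 ≤ n k)
    (hc : ∀ k, 1 ≤ k → 0 < c k) (hnc : ∀ k, 1 ≤ k → (n k : ℝ) * c k < 1)
    {k l : ℕ} (hk : 1 ≤ k) (hl : 1 ≤ l) {s : ℝ} (hs : moranRatio n c k l ≤ s) :
    ∏ i ∈ Finset.Icc (k + 1) (k + l), (n i : ℝ) ≤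
      (moranDelta c k / moranDelta c (k + l)) ^ s := by
  set P := ∏ i ∈ Finset.Icc (k + 1) (k + l), (n i : ℝ) with hP
  set Qc := ∏ i ∈ Finset.Icc (k + 1) (k + l), c i with hQc
  have hQpos : 0 < Qc := prod_c_pos hc k l
  have hQlt : Qc < 1 := lt_of_le_of_lt (prod_c_le_pow hn hc hnc k l)
    (pow_lt_one₀ (by norm_num) (by norm_num) (by omega))
  have hD : 0 < -Real.log Qc := by
    rw [neg_pos]
    exact Real.log_neg hQpos hQlt
  have hP1 : (1:ℝ) ≤ P := one_le_prod_n hn k l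
  have hlogP : Real.log P ≤ s * (-Real.log Qc) := by
    have := (div_le_iff₀ hD).1 hs
    exact this
  have hδ : moranDelta c k / moranDelta c (k + l) = Qc⁻¹ := by
    rw [moranDelta_add, hQc]
    field_simp [ne_of_gt (moranDelta_pos hc k)]
  rw [hδ]
  have hrpow : (Qc⁻¹ : ℝ) ^ s = Real.exp (s * (-Real.log Qc)) := by
    rw [Real.rpow_def_of_pos (by positivity), Real.log_inv]
    ring_nf
  rw [hrpow]
  calc P = Real.exp (Real.log P) := (Real.exp_log (by linarith)).symm
    _ ≤ Real.exp (s * (-Real.log Qc)) := Real.exp_le_exp.2 hlogP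

/-- Upper bound: covering estimate for the Moran set. -/
lemma moran_upper_bound {n : ℕ → ℕ} {c : ℕ → ℝ}
    (hn : ∀ k, 1 ≤ k → 2 ≤ n k) (hc : ∀ k, 1 ≤ k → 0 < c k)
    (hnc : ∀ k, 1 ≤ k → (n k : ℝ) * c k < 1)
    (S : HomMoranStructure n c) {M : ℕ} (hM : ∀ k, 1 ≤ k → n k ≤ M)
    {s : ℝ} (hs : 0 ≤ s) {L : ℕ}
    (hL : ∀ l k : ℕ, L ≤ l → 1 ≤ k →
      (∏ i ∈ Finset.Icc (k + 1) (k + l), (n i : ℝ)) ≤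
        (moranDelta c k / moranDelta c (k + l)) ^ s)
    {r R : ℝ} (hr : 0 < r) (hrR : r < R) (hR1 : R < 1) (x : ℝ) :
    coveringNumber r (Metric.ball x R ∩ moranSet S) ≤
      ENNReal.ofReal ((4 * (M : ℝ) ^ (L + 2)) * (R / r) ^ s) := by
  classical
  have hn1 : ∀ k, 1 ≤ k → 1 ≤ n k := fun k hk => le_trans one_le_two (hn k hk)
  have hM2 : 2 ≤ M := le_trans (hn 1 le_rfl) (hM 1 le_rfl)
  have hM1 : (1:ℝ) ≤ (M:ℝ) := by exact_mod_cast le_trans one_le_two hM2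
  have hδpos : ∀ j, 0 < moranDelta c j := moranDelta_pos hc
  have hex : ∀ t : ℝ, 0 < t → ∃ j, moranDelta c j ≤ t := by
    intro t ht
    obtain ⟨j, hj⟩ := exists_pow_lt_of_lt_one ht (by norm_num : (1/2 : ℝ) < 1)
    exact ⟨j, le_trans (moranDelta_le_pow hn hc hnc j) hj.le⟩
  have hR0 : 0 < R := lt_trans hr hrR
  set k := Nat.find (hex R hR0) with hkdef
  have hkR : moranDelta c k ≤ R := Nat.find_spec (hex R hR0)
  have hkmin : ∀ j, j < k → R < moranDelta c j := fun j hj =>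
    lt_of_not_ge (Nat.find_min (hex R hR0) hj)
  have hk1 : 1 ≤ k := by
    by_contra h
    have hk0 : k = 0 := by omega
    rw [hk0, moranDelta_zero] at hkR
    linarith
  set m := Nat.find (hex r hr) with hmdef
  have hmr : moranDelta c m ≤ r := Nat.find_spec (hex r hr)
  have hmmin : ∀ j, j < m → r < moranDelta c j := fun j hj =>
    lt_of_not_ge (Nat.find_min (hex r hr) hj)
  have hkm : k ≤ m := Nat.find_min' (hex R hR0) (le_trans hmr hrR.le)
  have hRr1 : 1 ≤ R / r := (one_le_div hr).2 hrR.le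
  have hRrs : 1 ≤ (R / r) ^ s := by
    rw [← Real.one_rpow s]
    exact Real.rpow_le_rpow (by norm_num) hRr1 hs
  -- prefix level k-1 words meeting the ball
  set Q := (wordFin n 0 (k - 1)).filter (fun τ => (S.I τ ∩ Metric.ball x R).Nonempty) with hQ
  set P := (wordFin n 0 m).filter (fun σ => (S.I σ ∩ Metric.ball x R).Nonempty) with hPdef
  have hQcard : (Q.card : ℝ) ≤ 4 := by
    have hball : Metric.ball x R ⊆ Set.Icc (x - R) ((x - R) + 2 * R) := by
      rw [Real.ball_eq_Ioo]
      intro z hz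
      exact ⟨hz.1.le, by rcases hz with ⟨h1, h2⟩; linarith⟩
    have hF : ∀ σ ∈ Q, MoranWord n σ ∧ σ.length = k - 1 ∧ (S.I σ ∩ Metric.ball x R).Nonempty := by
      intro σ hσ
      rw [hQ, Finset.mem_filter, mem_wordFin] at hσ
      exact ⟨moranWord_iff_from.2 hσ.1.1, hσ.1.2, hσ.2⟩
    have h1 := card_words_meeting S hc (k - 1) (by linarith : (0:ℝ) ≤ 2 * R) hball Q hF
    have hRδ : R < moranDelta c (k - 1) := hkmin _ (by omega)
    have hd : 2 * R / moranDelta c (k - 1) ≤ 2 := by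
      rw [div_le_iff₀ (hδpos _)]
      linarith
    linarith
  -- the cover by balls centered at midpoints of level-m intervals
  set Y := P.image (fun σ => leftEnd S σ + moranDelta c m / 2) with hY
  have hcover : Metric.ball x R ∩ moranSet S ⊆ ⋃ y ∈ Y, Metric.ball y r := by
    rintro z ⟨hzb, hzE⟩
    rw [moranSet, Set.mem_iInter] at hzE
    have hz := hzE (m - 1)
    rw [Set.mem_iUnion] at hz
    obtain ⟨σ, hz⟩ := hz
    rw [Set.mem_iUnion] at hz
    obtain ⟨⟨hw, hlen⟩, hzI⟩ := hz
    have hm1 : 1 ≤ m := le_trans hk1 hkm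
    have hlen' : σ.length = m := by omega
    have hσP : σ ∈ P := by
      rw [hPdef, Finset.mem_filter, mem_wordFin]
      exact ⟨⟨moranWord_iff_from.1 hw, hlen'⟩, z, hzI, hzb⟩
    have hzI' : z ∈ Set.Icc (leftEnd S σ) (leftEnd S σ + moranDelta c m) := by
      rw [I_eq_Icc S hc hw, hlen'] at hzI
      exact hzI
    rw [Set.mem_iUnion₂]
    refine ⟨leftEnd S σ + moranDelta c m / 2, Finset.mem_image_of_mem _ hσP, ?_⟩
    rw [Metric.mem_ball, Real.dist_eq, abs_lt]
    have h1 := hzI'.1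
    have h2 := hzI'.2
    have h3 := hδpos m
    constructor <;> linarith
  -- counting P via fibers over Q
  have hmaps : ∀ σ ∈ P, σ.take (k - 1) ∈ Q := by
    intro σ hσ
    rw [hPdef, Finset.mem_filter, mem_wordFin] at hσ
    obtain ⟨⟨hw, hlen⟩, z, hz1, hz2⟩ := hσ
    rw [hQ, Finset.mem_filter, mem_wordFin]
    refine ⟨⟨mwf_take hw _, by rw [List.length_take]; omega⟩, z, ?_, hz2⟩
    exact I_subset_take S σ (moranWord_iff_from.2 hw) (k - 1) hz1
  set B := (wordFin n (k - 1) (m - (k - 1))).card with hB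
  have hfiber : ∀ τ ∈ Q, (P.filter (fun σ => σ.take (k - 1) = τ)).card ≤ B := by
    intro τ hτ
    apply Finset.card_le_card_of_injOn (fun σ => σ.drop (k - 1))
    · intro σ hσ
      rw [Finset.mem_coe, Finset.mem_filter] at hσ
      obtain ⟨hσP, htake⟩ := hσ
      rw [hPdef, Finset.mem_filter, mem_wordFin] at hσP
      obtain ⟨⟨hw, hlen⟩, -⟩ := hσP
      rw [Finset.mem_coe, mem_wordFin]
      constructor
      · have := mwf_drop hw (k - 1)
        rwa [Nat.zero_add] at this
      · rw [List.length_drop, hlen]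
    · intro σ₁ h1 σ₂ h2 hd
      simp only [Finset.coe_filter, Set.mem_setOf_eq, Finset.mem_filter] at h1 h2
      have hd' : σ₁.drop (k - 1) = σ₂.drop (k - 1) := hd
      calc σ₁ = σ₁.take (k - 1) ++ σ₁.drop (k - 1) := (List.take_append_drop _ _).symm
        _ = σ₂.take (k - 1) ++ σ₂.drop (k - 1) := by rw [h1.2, h2.2, hd']
        _ = σ₂ := List.take_append_drop _ _
  have hPQ : P.card ≤ B * Q.card :=
    Finset.card_le_mul_card_image_of_maps_to hmaps B hfiber
  have hBval : (B : ℝ) = ∏ i ∈ Finset.Icc k m, (n i : ℝ) := by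
    rw [hB, card_wordFin hn1]
    have e1 : k - 1 + 1 = k := by omega
    have e2 : k - 1 + (m - (k - 1)) = m := by omega
    rw [e1, e2]
    push_cast
    rfl
  -- product bound
  have hprodbound : ∏ i ∈ Finset.Icc k m, (n i : ℝ) ≤ (M : ℝ) ^ (L + 2) * (R / r) ^ s := by
    have hMpow1 : (1:ℝ) ≤ (M:ℝ) ^ L := by
      calc (1:ℝ) = 1 ^ L := (one_pow L).symm
        _ ≤ (M:ℝ) ^ L := pow_le_pow_left₀ (by norm_num) hM1 L
    rcases eq_or_lt_of_le hkm with heq | hlt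
    · -- m = k
      rw [← heq, Finset.Icc_self, Finset.prod_singleton]
      have hnk : (n k : ℝ) ≤ M := by exact_mod_cast hM k hk1
      have hMp : (M:ℝ) ≤ (M:ℝ) ^ (L + 2) := by
        calc (M:ℝ) = (M:ℝ) ^ 1 := (pow_one _).symm
          _ ≤ (M:ℝ) ^ (L + 2) := pow_le_pow_right₀ hM1 (by omega)
      nlinarith
    · -- k < m
      set l := m - 1 - k with hldef
      have hm_eq : m = k + l + 1 := by omega
      have hsplit : ∏ i ∈ Finset.Icc k m, (n i : ℝ) =
          (n k : ℝ) * (∏ i ∈ Finset.Icc (k + 1) (k + l), (n i : ℝ)) * (n m : ℝ) := by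
        rw [hm_eq]
        rw [Finset.prod_Icc_succ_top (by omega : k ≤ k + l + 1)]
        have e3 : Finset.Icc k (k + l) = insert k (Finset.Icc (k + 1) (k + l)) := by
          rw [Finset.Icc_add_one_left_eq_Ioc, Finset.Ioc_insert_left (Nat.le_add_right k l)]
        rw [e3, Finset.prod_insert (by simp)]
      have hmid : ∏ i ∈ Finset.Icc (k + 1) (k + l), (n i : ℝ) ≤ (M : ℝ) ^ L * (R / r) ^ s := by
        rcases le_or_gt L l with hLl | hLl
        · have h1 := hL l k hLl hk1
          have hδm1 : r < moranDelta c (k + l) := hmmin _ (by omega)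
          have h2 : moranDelta c k / moranDelta c (k + l) ≤ R / r := by
            rw [div_le_div_iff₀ (hδpos _) hr]
            nlinarith [hδpos (k + l)]
          have h3 : (moranDelta c k / moranDelta c (k + l)) ^ s ≤ (R / r) ^ s :=
            Real.rpow_le_rpow (div_nonneg (hδpos _).le (hδpos _).le) h2 hs
          calc ∏ i ∈ Finset.Icc (k + 1) (k + l), (n i : ℝ)
              ≤ (R / r) ^ s := le_trans h1 h3
            _ ≤ (M : ℝ) ^ L * (R / r) ^ s := by nlinarith
        · have h1 := prod_n_le_pow hM k l
          have h2 : (M : ℝ) ^ l ≤ (M : ℝ) ^ L := pow_le_pow_right₀ hM1 hLl.le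
          calc ∏ i ∈ Finset.Icc (k + 1) (k + l), (n i : ℝ)
              ≤ (M:ℝ) ^ L := le_trans h1 h2
            _ ≤ (M : ℝ) ^ L * (R / r) ^ s := by nlinarith
      have hnk : (n k : ℝ) ≤ M := by exact_mod_cast hM k hk1
      have hnm : (n m : ℝ) ≤ M := by exact_mod_cast hM m (by omega)
      have hnk0 : (0:ℝ) ≤ (n k : ℝ) := by positivity
      have hnm0 : (0:ℝ) ≤ (n m : ℝ) := by positivity
      have hmid0 : (0:ℝ) ≤ ∏ i ∈ Finset.Icc (k + 1) (k + l), (n i : ℝ) :=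
        Finset.prod_nonneg (fun i _ => by positivity)
      rw [hsplit]
      have hpows : (M:ℝ) ^ (L + 2) * (R / r) ^ s = (M:ℝ) * ((M:ℝ) ^ L * (R / r) ^ s) * M := by
        ring
      rw [hpows]
      have hRrs0 : (0:ℝ) < (R / r) ^ s := Real.rpow_pos_of_pos (div_pos hR0 hr) s
      have hM0 : (0:ℝ) < (M:ℝ) := lt_of_lt_of_le one_pos hM1
      have hML0 : (0:ℝ) < (M:ℝ) ^ L := pow_pos hM0 L
      exact mul_le_mul (mul_le_mul hnk hmid hmid0 hM0.le) hnm hnm0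
        (mul_nonneg hM0.le (mul_nonneg hML0.le hRrs0.le))
  -- put everything together
  have htotal : (P.card : ℝ) ≤ (4 * (M : ℝ) ^ (L + 2)) * (R / r) ^ s := by
    have h1 : (P.card : ℝ) ≤ (B : ℝ) * (Q.card : ℝ) := by exact_mod_cast hPQ
    have hQ0 : (0:ℝ) ≤ (Q.card : ℝ) := Nat.cast_nonneg _
    have h2 : (B : ℝ) * (Q.card : ℝ) ≤ ((M:ℝ) ^ (L + 2) * (R / r) ^ s) * 4 := by
      have hRrs0 : (0:ℝ) < (R / r) ^ s := Real.rpow_pos_of_pos (div_pos hR0 hr) s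
      have hM0 : (0:ℝ) < (M:ℝ) := lt_of_lt_of_le one_pos hM1
      apply mul_le_mul _ hQcard hQ0
        (mul_nonneg (pow_pos hM0 (L + 2)).le hRrs0.le)
      rw [hBval]; exact hprodbound
    calc (P.card : ℝ) ≤ (B : ℝ) * (Q.card : ℝ) := h1
      _ ≤ ((M:ℝ) ^ (L + 2) * (R / r) ^ s) * 4 := h2
      _ = (4 * (M : ℝ) ^ (L + 2)) * (R / r) ^ s := by ring
  refine le_trans (coveringNumber_le_card Y hcover) ?_
  have h1 : (Y.card : ℝ≥0∞) ≤ (P.card : ℝ≥0∞) := by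
    exact_mod_cast Finset.card_image_le
  refine le_trans h1 ?_
  rw [show ((P.card : ℝ≥0∞)) = ENNReal.ofReal (P.card : ℝ) from (ENNReal.ofReal_natCast _).symm]
  exact ENNReal.ofReal_le_ofReal htotal

end Upper


section Lower

lemma moranDelta_anti {c : ℕ → ℝ} (hc : ∀ k, 1 ≤ k → 0 < c k)
    (hhalf : ∀ k, 1 ≤ k → c k ≤ 1) {k m : ℕ} (hkm : k ≤ m) :
    moranDelta c m ≤ moranDelta c k := by
  obtain ⟨l, rfl⟩ : ∃ l, m = k + l := ⟨m - k, by omega⟩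
  rw [moranDelta_add]
  have h1 : ∏ i ∈ Finset.Icc (k + 1) (k + l), c i ≤ 1 :=
    Finset.prod_le_one (fun i hi => (hc i (by rcases Finset.mem_Icc.1 hi with ⟨a, b⟩; omega)).le)
      (fun i hi => hhalf i (by rcases Finset.mem_Icc.1 hi with ⟨a, b⟩; omega))
  nlinarith [moranDelta_pos hc k]

/-- Key lower-bound counting estimate. -/
lemma moran_count_le {n : ℕ → ℕ} {c : ℕ → ℝ}
    (hn : ∀ k, 1 ≤ k → 2 ≤ n k) (hc : ∀ k, 1 ≤ k → 0 < c k)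
    (hnc : ∀ k, 1 ≤ k → (n k : ℝ) * c k < 1)
    (S : HomMoranStructure n c) {s b C : ℝ} (hC : 0 < C)
    (hyp : ∀ r R : ℝ, 0 < r → r < R → R < b → ∀ x ∈ moranSet S,
      coveringNumber r (Metric.ball x R ∩ moranSet S) ≤ ENNReal.ofReal (C * (R / r) ^ s))
    {k l : ℕ} (hl : 1 ≤ l) (hb : 2 * moranDelta c k < b) :
    ∏ i ∈ Finset.Icc (k + 1) (k + l), (n i : ℝ) ≤
      (4 * C) * (2 * moranDelta c k / moranDelta c (k + l)) ^ s := by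
  classical
  have hn1 : ∀ j, 1 ≤ j → 1 ≤ n j := fun j hj => le_trans one_le_two (hn j hj)
  have hδpos : ∀ j, 0 < moranDelta c j := moranDelta_pos hc
  set δk := moranDelta c k with hδk
  set r := moranDelta c (k + l) with hrdef
  set R := 2 * δk with hRdef
  have hr0 : 0 < r := hδpos _
  have hrR : r < R := by
    have h1 : moranDelta c (k + l) ≤ moranDelta c k :=
      moranDelta_anti hc (fun j hj => by
        have := c_lt_half hn hc hnc j hj; linarith) (by omega)
    have h2 := hδpos k
    show moranDelta c (k + l) < 2 * moranDelta c k
    linarith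
  -- base word and point
  set σ0 : List ℕ := List.replicate k 1 with hσ0
  have hσ0w : MoranWord n σ0 := moranWord_iff_from.2 (by
    have := mwf_replicate_one hn1 0 k
    simpa [hσ0] using this)
  have hσ0len : σ0.length = k := by simp [hσ0]
  obtain ⟨x, hxE, hxI⟩ := nonempty_moranSet_inter S hn1 hc σ0 hσ0w
  have hwext : ∀ τ ∈ wordFin n k l, MoranWord n (σ0 ++ τ) := by
    intro τ hτ
    rw [mem_wordFin] at hτ
    have h0 : MoranWordFrom n (0 + σ0.length) τ := by rw [Nat.zero_add, hσ0len]; exact hτ.1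
    exact moranWord_iff_from.2 (mwf_append (moranWord_iff_from.1 hσ0w) h0)
  have hlenext : ∀ τ ∈ wordFin n k l, (σ0 ++ τ).length = k + l := by
    intro τ hτ
    rw [mem_wordFin] at hτ
    simp [hσ0len, hτ.2]
  -- choose a point of E in each extension
  have hext : ∀ τ : List ℕ, ∃ pt : ℝ, τ ∈ wordFin n k l →
      pt ∈ moranSet S ∩ S.I (σ0 ++ τ) := by
    intro τ
    by_cases hτ : τ ∈ wordFin n k l
    · obtain ⟨pt, hpt⟩ := nonempty_moranSet_inter S hn1 hc (σ0 ++ τ) (hwext τ hτ)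
      exact ⟨pt, fun _ => hpt⟩
    · exact ⟨0, fun h => absurd h hτ⟩
  choose p hp using hext
  -- p τ lies in the ball B(x, R)
  have hpball : ∀ τ ∈ wordFin n k l, p τ ∈ Metric.ball x R ∩ moranSet S := by
    intro τ hτ
    refine ⟨?_, (hp τ hτ).1⟩
    have h1 : p τ ∈ S.I σ0 := I_subset_prefix S (hwext τ hτ) (hp τ hτ).2
    rw [I_eq_Icc S hc hσ0w, hσ0len] at h1 hxI
    rw [Metric.mem_ball, Real.dist_eq, abs_lt]
    have h2 := hδpos k
    rcases h1 with ⟨a1, a2⟩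
    rcases hxI with ⟨b1, b2⟩
    constructor
    · show -(2 * moranDelta c k) < p τ - x
      linarith
    · show p τ - x < 2 * moranDelta c k
      linarith
  -- apply the hypothesis
  have hcov := hyp r R hr0 hrR hb x hxE
  -- lower bound on the covering number
  have hlow : ENNReal.ofReal ((∏ i ∈ Finset.Icc (k + 1) (k + l), (n i : ℝ)) / 4) ≤
      coveringNumber r (Metric.ball x R ∩ moranSet S) := by
    apply le_coveringNumber
    intro T hT
    -- assign to each word a covering ball
    have hsel : ∀ τ : List ℕ, ∃ y : ℝ, τ ∈ wordFin n k l →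
        y ∈ T ∧ p τ ∈ Metric.ball y r := by
      intro τ
      by_cases hτ : τ ∈ wordFin n k l
      · have := hT (hpball τ hτ)
        rw [Set.mem_iUnion₂] at this
        obtain ⟨y, hy1, hy2⟩ := this
        exact ⟨y, fun _ => ⟨hy1, hy2⟩⟩
      · exact ⟨0, fun h => absurd h hτ⟩
    choose f hf using hsel
    have hcard : (wordFin n k l).card ≤ 4 * T.card := by
      apply Finset.card_le_mul_card_image_of_maps_to (f := f) (fun τ hτ => (hf τ hτ).1) 4
      intro y hy
      -- words whose assigned center is y: their `leftEnd`s are r-separated in a 3r-window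
      set Fib := (wordFin n k l).filter (fun τ => f τ = y) with hFib
      have hmemFib : ∀ τ ∈ Fib, τ ∈ wordFin n k l ∧ f τ = y := by
        intro τ hτ
        rwa [hFib, Finset.mem_filter] at hτ
      set G := Fib.image (fun τ => leftEnd S (σ0 ++ τ)) with hG
      have hsep' : ∀ τ₁, τ₁ ∈ wordFin n k l → ∀ τ₂, τ₂ ∈ wordFin n k l → τ₁ ≠ τ₂ →
          moranDelta c (k + l) ≤ |leftEnd S (σ0 ++ τ₁) - leftEnd S (σ0 ++ τ₂)| := by
        intro τ₁ h1 τ₂ h2 hne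
        have hne' : σ0 ++ τ₁ ≠ σ0 ++ τ₂ := fun hh => hne (by
          have := congrArg (List.drop σ0.length) hh
          simpa using this)
        have := leftEnd_sep S hc (hwext τ₁ h1) (hwext τ₂ h2)
          ((hlenext τ₁ h1).trans (hlenext τ₂ h2).symm) hne'
        rwa [hlenext τ₁ h1] at this
      have hinj : Set.InjOn (fun τ => leftEnd S (σ0 ++ τ)) Fib := by
        intro τ₁ h1 τ₂ h2 he
        rw [Finset.mem_coe] at h1 h2
        obtain ⟨h1', -⟩ := hmemFib τ₁ h1
        obtain ⟨h2', -⟩ := hmemFib τ₂ h2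
        by_contra hne
        have he' : leftEnd S (σ0 ++ τ₁) = leftEnd S (σ0 ++ τ₂) := he
        have := hsep' τ₁ h1' τ₂ h2' hne
        rw [he', sub_self, abs_zero] at this
        linarith [hδpos (k + l)]
      have hsepG : ∀ a ∈ G, ∀ b' ∈ G, a ≠ b' → r ≤ |a - b'| := by
        intro a ha b' hb' hab
        rw [hG, Finset.mem_image] at ha hb'
        obtain ⟨τ₁, h1, rfl⟩ := ha
        obtain ⟨τ₂, h2, rfl⟩ := hb'
        obtain ⟨h1', -⟩ := hmemFib τ₁ h1
        obtain ⟨h2', -⟩ := hmemFib τ₂ h2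
        have hne : τ₁ ≠ τ₂ := fun hh => hab (by rw [hh])
        exact hsep' τ₁ h1' τ₂ h2' hne
      have hmemG : ∀ a ∈ G, a ∈ Set.Icc (y - 2 * r) ((y - 2 * r) + 3 * r) := by
        intro a ha
        rw [hG, Finset.mem_image] at ha
        obtain ⟨τ, hτ, rfl⟩ := ha
        obtain ⟨hτ', hfy⟩ := hmemFib τ hτ
        have hball := (hf τ hτ').2
        rw [hfy] at hball
        have hpmem : p τ ∈ S.I (σ0 ++ τ) := (hp τ hτ').2
        rw [I_eq_Icc S hc (hwext τ hτ'), hlenext τ hτ'] at hpmem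
        rw [Metric.mem_ball, Real.dist_eq, abs_lt] at hball
        rcases hpmem with ⟨a1, a2⟩
        rcases hball with ⟨b1, b2⟩
        rw [← hrdef] at a2
        rw [Set.mem_Icc]
        constructor <;> linarith
      have hGcard := card_le_of_sep hr0 (by linarith : (0:ℝ) ≤ 3 * r) hmemG hsepG
      have hfin : (Fib.card : ℝ) ≤ 4 := by
        rw [← Finset.card_image_of_injOn hinj, ← hG]
        have h3 : 3 * r / r + 1 = 4 := by field_simp; ring
        rw [h3] at hGcard
        exact hGcard
      exact_mod_cast hfin
    -- convert to the real inequality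
    have hval : (∏ i ∈ Finset.Icc (k + 1) (k + l), (n i : ℝ)) = ((wordFin n k l).card : ℝ) := by
      rw [card_wordFin hn1]
      push_cast
      rfl
    rw [hval]
    have h4 : ((wordFin n k l).card : ℝ) / 4 ≤ (T.card : ℝ) := by
      have : ((wordFin n k l).card : ℝ) ≤ 4 * (T.card : ℝ) := by exact_mod_cast hcard
      linarith
    calc ENNReal.ofReal (((wordFin n k l).card : ℝ) / 4)
        ≤ ENNReal.ofReal ((T.card : ℝ)) := ENNReal.ofReal_le_ofReal h4
      _ = (T.card : ℝ≥0∞) := ENNReal.ofReal_natCast _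
  -- combine
  have hcomb := le_trans hlow hcov
  have hres := (ENNReal.ofReal_le_ofReal_iff (by
    have hRrs0 : (0:ℝ) < (R / r) ^ s := Real.rpow_pos_of_pos (div_pos (lt_trans hr0 hrR) hr0) s
    nlinarith)).1 hcomb
  rw [hRdef, hrdef, hδk] at hres
  linarith

end Lower


section Ratio

lemma neg_log_prod_c_pos {n : ℕ → ℕ} {c : ℕ → ℝ} (hn : ∀ k, 1 ≤ k → 2 ≤ n k)
    (hc : ∀ k, 1 ≤ k → 0 < c k) (hnc : ∀ k, 1 ≤ k → (n k : ℝ) * c k < 1)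
    {k l : ℕ} (hl : 1 ≤ l) :
    0 < -Real.log (∏ i ∈ Finset.Icc (k + 1) (k + l), c i) := by
  have h1 := prod_c_pos hc k l
  have h2 : ∏ i ∈ Finset.Icc (k + 1) (k + l), c i < 1 :=
    lt_of_le_of_lt (prod_c_le_pow hn hc hnc k l)
      (pow_lt_one₀ (by norm_num) (by norm_num) (by omega))
  rw [neg_pos]
  exact Real.log_neg h1 h2

lemma neg_log_prod_c_ge {n : ℕ → ℕ} {c : ℕ → ℝ} (hn : ∀ k, 1 ≤ k → 2 ≤ n k)
    (hc : ∀ k, 1 ≤ k → 0 < c k) (hnc : ∀ k, 1 ≤ k → (n k : ℝ) * c k < 1) (k l : ℕ) :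
    (l : ℝ) * Real.log 2 ≤ -Real.log (∏ i ∈ Finset.Icc (k + 1) (k + l), c i) := by
  have h1 := prod_c_pos hc k l
  have h2 := prod_c_le_pow hn hc hnc k l
  have h3 := Real.log_le_log h1 h2
  rw [Real.log_pow] at h3
  have h4 : Real.log (1/2 : ℝ) = -Real.log 2 := by
    rw [one_div, Real.log_inv]
  rw [h4] at h3
  push_cast at h3 ⊢
  linarith

lemma neg_log_prod_c_nonneg {n : ℕ → ℕ} {c : ℕ → ℝ} (hn : ∀ k, 1 ≤ k → 2 ≤ n k)
    (hc : ∀ k, 1 ≤ k → 0 < c k) (hnc : ∀ k, 1 ≤ k → (n k : ℝ) * c k < 1) (k l : ℕ) :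
    0 ≤ -Real.log (∏ i ∈ Finset.Icc (k + 1) (k + l), c i) := by
  have := neg_log_prod_c_ge hn hc hnc k l
  have h2 : (0:ℝ) ≤ (l : ℝ) * Real.log 2 := by
    have := Real.log_nonneg (by norm_num : (1:ℝ) ≤ 2)
    positivity
  linarith

lemma moranRatio_zero (n : ℕ → ℕ) (c : ℕ → ℝ) (k : ℕ) : moranRatio n c k 0 = 0 := by
  have he : Finset.Icc (k + 1) (k + 0) = ∅ := by
    rw [Nat.add_zero]
    exact Finset.Icc_eq_empty (by omega)
  simp [moranRatio, he]

lemma moranRatio_nonneg {n : ℕ → ℕ} {c : ℕ → ℝ} (hn : ∀ k, 1 ≤ k → 2 ≤ n k)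
    (hc : ∀ k, 1 ≤ k → 0 < c k) (hnc : ∀ k, 1 ≤ k → (n k : ℝ) * c k < 1) (k l : ℕ) :
    0 ≤ moranRatio n c k l := by
  rcases Nat.eq_zero_or_pos l with rfl | hl
  · rw [moranRatio_zero]
  · apply div_nonneg
    · exact Real.log_nonneg (one_le_prod_n hn k l)
    · exact neg_log_prod_c_nonneg hn hc hnc k l

lemma moranRatio_le_one {n : ℕ → ℕ} {c : ℕ → ℝ} (hn : ∀ k, 1 ≤ k → 2 ≤ n k)
    (hc : ∀ k, 1 ≤ k → 0 < c k) (hnc : ∀ k, 1 ≤ k → (n k : ℝ) * c k < 1) (k l : ℕ) :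
    moranRatio n c k l ≤ 1 := by
  rcases Nat.eq_zero_or_pos l with rfl | hl
  · rw [moranRatio_zero]; norm_num
  · rw [moranRatio, div_le_one (neg_log_prod_c_pos hn hc hnc hl)]
    have hP : (0:ℝ) < ∏ i ∈ Finset.Icc (k + 1) (k + l), (n i : ℝ) :=
      lt_of_lt_of_le one_pos (one_le_prod_n hn k l)
    have hQ := prod_c_pos hc k l
    have hPQ : (∏ i ∈ Finset.Icc (k + 1) (k + l), (n i : ℝ)) *
        (∏ i ∈ Finset.Icc (k + 1) (k + l), c i) ≤ 1 := by
      rw [← Finset.prod_mul_distrib]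
      apply Finset.prod_le_one
      · intro i hi
        rw [Finset.mem_Icc] at hi
        have := hc i (by omega)
        positivity
      · intro i hi
        rw [Finset.mem_Icc] at hi
        exact (hnc i (by omega)).le
    have h1 : Real.log ((∏ i ∈ Finset.Icc (k + 1) (k + l), (n i : ℝ)) *
        (∏ i ∈ Finset.Icc (k + 1) (k + l), c i)) ≤ 0 :=
      Real.log_nonpos (by positivity) hPQ
    rw [Real.log_mul (ne_of_gt hP) (ne_of_gt hQ)] at h1
    linarith

/-- Shifting the level upward while keeping the ratio essentially as large. -/
lemma exists_large_ratio {n : ℕ → ℕ} {c : ℕ → ℝ} (hn : ∀ k, 1 ≤ k → 2 ≤ n k)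
    (hc : ∀ k, 1 ≤ k → 0 < c k) (hnc : ∀ k, 1 ≤ k → (n k : ℝ) * c k < 1)
    {M : ℕ} (hM : ∀ k, 1 ≤ k → n k ≤ M)
    {s₁ s₂ : ℝ} (h12 : s₁ < s₂) (hs1 : 0 ≤ s₁)
    (hfreq : ∀ l₀ : ℕ, ∃ l, l₀ ≤ l ∧ ∃ k : ℕ, 1 ≤ k ∧ s₂ < moranRatio n c k l)
    (K L₀ : ℕ) (hK : 1 ≤ K) (hL₀ : 1 ≤ L₀) :
    ∃ k, K ≤ k ∧ ∃ l, L₀ ≤ l ∧ s₁ < moranRatio n c k l := by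
  have hM2 : 2 ≤ M := le_trans (hn 1 le_rfl) (hM 1 le_rfl)
  have hM1 : (1:ℝ) ≤ (M:ℝ) := by exact_mod_cast le_trans one_le_two hM2
  have hlog2 : (0:ℝ) < Real.log 2 := Real.log_pos (by norm_num)
  have hlogM : (0:ℝ) ≤ Real.log M := Real.log_nonneg hM1
  set T : ℝ := (K : ℝ) * Real.log M / ((s₂ - s₁) * Real.log 2) with hT
  set l₀ : ℕ := max (L₀ + K) (⌈T⌉₊ + K + 1) with hl₀
  obtain ⟨l, hll₀, k₀, hk₀1, hrat⟩ := hfreq l₀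
  have hlL₀K : L₀ + K ≤ l := le_trans (le_max_left _ _) hll₀
  have hlT : ⌈T⌉₊ + K + 1 ≤ l := le_trans (le_max_right _ _) hll₀
  have hl1 : 1 ≤ l := by omega
  rcases le_or_gt K k₀ with hKk₀ | hk₀K
  · exact ⟨k₀, hKk₀, l, by omega, lt_trans h12 hrat⟩
  · -- shift from k₀ up to K
    set d := K - k₀ with hd
    set l' := l - d with hl'd
    have hKl : K + l' = k₀ + l := by omega
    have hk₀K' : k₀ ≤ K := hk₀K.le
    have hKk₀l : K ≤ k₀ + l := by omega
    have hl'1 : L₀ ≤ l' := by omega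
    -- products
    set A := ∏ i ∈ Finset.Icc (K + 1) (k₀ + l), (n i : ℝ) with hA
    set B := ∏ i ∈ Finset.Icc (k₀ + 1) K, (n i : ℝ) with hB
    set Ac := ∏ i ∈ Finset.Icc (K + 1) (k₀ + l), c i with hAc
    set Bc := ∏ i ∈ Finset.Icc (k₀ + 1) K, c i with hBc
    have hsplitn : (∏ i ∈ Finset.Icc (k₀ + 1) (k₀ + l), (n i : ℝ)) = B * A := by
      rw [hA, hB, Finset.Icc_add_one_left_eq_Ioc, Finset.Icc_add_one_left_eq_Ioc, Finset.Icc_add_one_left_eq_Ioc]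
      exact (Finset.prod_Ioc_consecutive _ hk₀K' hKk₀l).symm
    have hsplitc : (∏ i ∈ Finset.Icc (k₀ + 1) (k₀ + l), c i) = Bc * Ac := by
      rw [hAc, hBc, Finset.Icc_add_one_left_eq_Ioc, Finset.Icc_add_one_left_eq_Ioc, Finset.Icc_add_one_left_eq_Ioc]
      exact (Finset.prod_Ioc_consecutive _ hk₀K' hKk₀l).symm
    -- positivity and bounds
    have hApos : (0:ℝ) < A := by
      rw [hA, ← hKl]
      exact lt_of_lt_of_le one_pos (one_le_prod_n hn K l')
    have hBpos : (0:ℝ) < B := by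
      have : B = ∏ i ∈ Finset.Icc (k₀ + 1) (k₀ + d), (n i : ℝ) := by
        rw [hB]; congr 1; congr 1; omega
      rw [this]
      exact lt_of_lt_of_le one_pos (one_le_prod_n hn k₀ d)
    have hBle : B ≤ (M:ℝ) ^ d := by
      have : B = ∏ i ∈ Finset.Icc (k₀ + 1) (k₀ + d), (n i : ℝ) := by
        rw [hB]; congr 1; congr 1; omega
      rw [this]
      exact prod_n_le_pow hM k₀ d
    have hAcpos : (0:ℝ) < Ac := by
      rw [hAc, ← hKl]
      exact prod_c_pos hc K l'
    have hBcpos : (0:ℝ) < Bc := by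
      have : Bc = ∏ i ∈ Finset.Icc (k₀ + 1) (k₀ + d), c i := by
        rw [hBc]; congr 1; congr 1; omega
      rw [this]
      exact prod_c_pos hc k₀ d
    have hBcle : Bc ≤ 1 := by
      have e : Bc = ∏ i ∈ Finset.Icc (k₀ + 1) (k₀ + d), c i := by
        rw [hBc]; congr 1; congr 1; omega
      rw [e]
      calc ∏ i ∈ Finset.Icc (k₀ + 1) (k₀ + d), c i ≤ (1/2:ℝ) ^ d :=
            prod_c_le_pow hn hc hnc k₀ d
        _ ≤ 1 := by apply pow_le_one₀ <;> norm_num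
    -- denominators
    have hD1 : (l' : ℝ) * Real.log 2 ≤ -Real.log Ac := by
      rw [hAc, ← hKl]
      exact neg_log_prod_c_ge hn hc hnc K l'
    have hD1pos : (0:ℝ) < -Real.log Ac := by
      rw [hAc, ← hKl]
      exact neg_log_prod_c_pos hn hc hnc (by omega)
    have hD0pos : (0:ℝ) < -Real.log (∏ i ∈ Finset.Icc (k₀ + 1) (k₀ + l), c i) :=
      neg_log_prod_c_pos hn hc hnc hl1
    have hD0split : -Real.log (∏ i ∈ Finset.Icc (k₀ + 1) (k₀ + l), c i) =
        -Real.log Bc + -Real.log Ac := by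
      rw [hsplitc, Real.log_mul (ne_of_gt hBcpos) (ne_of_gt hAcpos)]
      ring
    have hBcnn : 0 ≤ -Real.log Bc := by
      rw [neg_nonneg]
      exact Real.log_nonpos hBcpos.le hBcle
    -- numerator from the hypothesis
    have hnum : s₂ * (-Real.log (∏ i ∈ Finset.Icc (k₀ + 1) (k₀ + l), c i)) <
        Real.log (∏ i ∈ Finset.Icc (k₀ + 1) (k₀ + l), (n i : ℝ)) := by
      rw [moranRatio, lt_div_iff₀ hD0pos] at hrat
      exact hrat
    have hlognum : Real.log (∏ i ∈ Finset.Icc (k₀ + 1) (k₀ + l), (n i : ℝ)) =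
        Real.log B + Real.log A := by
      rw [hsplitn, Real.log_mul (ne_of_gt hBpos) (ne_of_gt hApos)]
    have hlogB : Real.log B ≤ (d : ℝ) * Real.log M := by
      have := Real.log_le_log hBpos hBle
      rwa [Real.log_pow] at this
    -- key chain
    have hdK : (d : ℝ) ≤ (K : ℝ) := by exact_mod_cast (by omega : d ≤ K)
    have hl'T : T < (l' : ℝ) := by
      have h1 : (⌈T⌉₊ : ℝ) + 1 ≤ (l' : ℝ) := by
        have : ⌈T⌉₊ + 1 ≤ l' := by omega
        exact_mod_cast this
      have h2 := Nat.le_ceil T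
      linarith
    have hdenom : (d : ℝ) * Real.log M < (s₂ - s₁) * (-Real.log Ac) := by
      have h1 : (d : ℝ) * Real.log M ≤ (K : ℝ) * Real.log M :=
        mul_le_mul_of_nonneg_right hdK hlogM
      have hpos12 : (0:ℝ) < (s₂ - s₁) * Real.log 2 := by
        have : 0 < s₂ - s₁ := by linarith
        positivity
      have h2 : (K : ℝ) * Real.log M = T * ((s₂ - s₁) * Real.log 2) := by
        rw [hT, div_mul_cancel₀ _ (ne_of_gt hpos12)]
      have h3 : T * ((s₂ - s₁) * Real.log 2) < (l' : ℝ) * ((s₂ - s₁) * Real.log 2) :=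
        mul_lt_mul_of_pos_right hl'T hpos12
      have h4 : (l' : ℝ) * ((s₂ - s₁) * Real.log 2) ≤ (s₂ - s₁) * (-Real.log Ac) := by
        have h5 : (l' : ℝ) * Real.log 2 ≤ -Real.log Ac := hD1
        calc (l' : ℝ) * ((s₂ - s₁) * Real.log 2) = (s₂ - s₁) * ((l':ℝ) * Real.log 2) := by ring
          _ ≤ (s₂ - s₁) * (-Real.log Ac) :=
            mul_le_mul_of_nonneg_left h5 (by linarith)
      linarith
    have hkey : s₁ * (-Real.log Ac) < Real.log A := by
      have hs2D : s₂ * (-Real.log Ac) ≤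
          s₂ * (-Real.log (∏ i ∈ Finset.Icc (k₀ + 1) (k₀ + l), c i)) := by
        rw [hD0split, mul_add]
        have hs2 : 0 ≤ s₂ := by linarith
        linarith [mul_nonneg hs2 hBcnn]
      have hfin := hnum
      rw [hlognum] at hfin
      have hexp : (s₂ - s₁) * (-Real.log Ac) =
          s₂ * (-Real.log Ac) - s₁ * (-Real.log Ac) := by ring
      linarith
    refine ⟨K, le_rfl, l', hl'1, ?_⟩
    rw [moranRatio, hKl]
    rw [lt_div_iff₀ ?_]
    · rw [← hA, ← hAc] at *
      exact hkey
    · rw [← hAc]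
      exact hD1pos

end Ratio

/-- **Theorem 3.1.** If `E` is a homogeneous Moran set with `sup_k n_k < ∞`, then
`dim_A E = limsup_{l→∞} sup_{k≥1} log(n_{k+1}⋯n_{k+l}) / (−log(c_{k+1}⋯c_{k+l}))`. -/
theorem assouadDim_homMoran (n : ℕ → ℕ) (c : ℕ → ℝ)
    (hn : ∀ k, 1 ≤ k → 2 ≤ n k) (hc : ∀ k, 1 ≤ k → 0 < c k)
    (hnc : ∀ k, 1 ≤ k → (n k : ℝ) * c k < 1)
    (S : HomMoranStructure n c) (E : Set ℝ) (hE : E = moranSet S)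
    (hsup : ∃ M : ℕ, ∀ k, 1 ≤ k → n k ≤ M) :
    assouadDim E =
      Filter.limsup (fun l : ℕ => ⨆ k : ℕ, moranRatio n c (k + 1) l) Filter.atTop := by
  classical
  obtain ⟨M, hM⟩ := hsup
  subst hE
  set u : ℕ → ℝ := fun l => ⨆ k : ℕ, moranRatio n c (k + 1) l with hu
  have hbdd : ∀ l k : ℕ, moranRatio n c (k + 1) l ≤ 1 :=
    fun l k => moranRatio_le_one hn hc hnc _ l
  have hbddAbove : ∀ l, BddAbove (Set.range (fun k => moranRatio n c (k + 1) l)) :=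
    fun l => ⟨1, by rintro _ ⟨k, rfl⟩; exact hbdd l k⟩
  have hule : ∀ l, u l ≤ 1 := fun l => ciSup_le (fun k => hbdd l k)
  have hu0 : ∀ l, 0 ≤ u l := fun l =>
    le_trans (moranRatio_nonneg hn hc hnc (0 + 1) l) (le_ciSup (hbddAbove l) 0)
  have hbu : Filter.IsBoundedUnder (· ≤ ·) Filter.atTop u :=
    Filter.isBoundedUnder_of ⟨1, hule⟩
  have hbl : Filter.IsBoundedUnder (· ≥ ·) Filter.atTop u :=
    Filter.isBoundedUnder_of ⟨0, hu0⟩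
  set sstar := Filter.limsup u Filter.atTop with hsstar
  have hsstar0 : 0 ≤ sstar :=
    Filter.le_limsup_of_frequently_le (Filter.Frequently.of_forall hu0) hbu
  rw [assouadDim]
  set A := {s : ℝ | 0 ≤ s ∧ ∃ b > (0 : ℝ), ∃ C > (0 : ℝ), ∀ r R : ℝ, 0 < r → r < R → R < b →
    ∀ x ∈ moranSet S, coveringNumber r (Metric.ball x R ∩ moranSet S) ≤
      ENNReal.ofReal (C * (R / r) ^ s)} with hA
  -- membership of sstar + ε for every ε > 0
  have hmem : ∀ ε : ℝ, 0 < ε → (sstar + ε) ∈ A := by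
    intro ε hε
    have hs : 0 ≤ sstar + ε := by linarith
    have hev : ∀ᶠ l in Filter.atTop, u l < sstar + ε :=
      Filter.eventually_lt_of_limsup_lt (by rw [← hsstar]; linarith) hbu
    obtain ⟨L0, hL0⟩ := Filter.eventually_atTop.1 hev
    set L := max L0 1 with hLdef
    have hprod : ∀ l k : ℕ, L ≤ l → 1 ≤ k →
        (∏ i ∈ Finset.Icc (k + 1) (k + l), (n i : ℝ)) ≤
          (moranDelta c k / moranDelta c (k + l)) ^ (sstar + ε) := by
      intro l k hLl hk1
      have h2 : moranRatio n c ((k - 1) + 1) l ≤ u l := le_ciSup (hbddAbove l) (k - 1)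
      have h1 : moranRatio n c k l ≤ u l := by
        have e : (k - 1) + 1 = k := by omega
        rwa [e] at h2
      have h3 := hL0 l (le_trans (le_max_left _ _) hLl)
      exact prod_le_of_ratio_le hn hc hnc hk1 (by omega) (by linarith)
    have hM2 : 2 ≤ M := le_trans (hn 1 le_rfl) (hM 1 le_rfl)
    have hMr : (0:ℝ) < (M:ℝ) := by
      have : (2:ℝ) ≤ (M:ℝ) := by exact_mod_cast hM2
      linarith
    refine ⟨hs, 1, one_pos, 4 * (M : ℝ) ^ (L + 2), by positivity, ?_⟩
    intro r R hr hrR hRb x _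
    exact moran_upper_bound hn hc hnc S hM hs hprod hr hrR hRb x
  -- every member of A dominates sstar
  have hlower : ∀ s ∈ A, sstar ≤ s := by
    rintro s ⟨hs0, b, hb, C, hC, hyp⟩
    by_contra hcon
    push_neg at hcon
    set s₁ := (s + sstar) / 2 with hs₁def
    set s₂ := (s₁ + sstar) / 2 with hs₂def
    have h1 : s < s₁ := by rw [hs₁def]; linarith
    have h2 : s₁ < s₂ := by rw [hs₂def, hs₁def]; linarith
    have h3 : s₂ < sstar := by rw [hs₂def, hs₁def]; linarith
    have hs₁0 : 0 ≤ s₁ := by linarith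
    have hfreq0 : ∃ᶠ l in Filter.atTop, s₂ < u l :=
      Filter.frequently_lt_of_lt_limsup hbl.isCoboundedUnder_le (by rw [← hsstar]; exact h3)
    have hfreq : ∀ l₀ : ℕ, ∃ l, l₀ ≤ l ∧ ∃ k : ℕ, 1 ≤ k ∧ s₂ < moranRatio n c k l := by
      intro l₀
      obtain ⟨l, hl₀, hul⟩ := (Filter.frequently_atTop.1 hfreq0) l₀
      obtain ⟨k', hk'⟩ := exists_lt_of_lt_ciSup hul
      exact ⟨l, hl₀, k' + 1, by omega, hk'⟩
    -- choose K
    obtain ⟨K₀, hK₀⟩ := exists_pow_lt_of_lt_one (half_pos hb) (by norm_num : (1/2 : ℝ) < 1)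
    set K := max K₀ 1 with hKdef
    have hK1 : 1 ≤ K := le_max_right _ _
    have hδK : ∀ k, K ≤ k → 2 * moranDelta c k < b := by
      intro k hk
      have h4 := moranDelta_le_pow hn hc hnc k
      have h5 : (1/2 : ℝ) ^ k ≤ (1/2 : ℝ) ^ K₀ :=
        pow_le_pow_of_le_one (by norm_num) (by norm_num)
          (le_trans (le_max_left _ _) hk)
      linarith
    -- choose L₀
    have hss : 0 < s₁ - s := by linarith
    have hlog2 : 0 < Real.log 2 := Real.log_pos (by norm_num)
    set T2 := (Real.log (4 * C) + s * Real.log 2) / ((s₁ - s) * Real.log 2) with hT2def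
    set L₀ := max 1 (⌈T2⌉₊ + 1) with hL₀def
    have hL₀1 : 1 ≤ L₀ := le_max_left _ _
    have hL₀T : T2 < (L₀ : ℝ) := by
      have h6 : (⌈T2⌉₊ : ℝ) + 1 ≤ (L₀ : ℝ) := by
        have : ⌈T2⌉₊ + 1 ≤ L₀ := le_max_right _ _
        exact_mod_cast this
      have h7 := Nat.le_ceil T2
      linarith
    obtain ⟨k, hKk, l, hL₀l, hratio⟩ :=
      exists_large_ratio hn hc hnc hM h2 hs₁0 hfreq K L₀ hK1 hL₀1
    -- counting bound
    have hcount := moran_count_le hn hc hnc S hC hyp (k := k) (l := l)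
      (by omega) (hδK k hKk)
    have hQpos : 0 < ∏ i ∈ Finset.Icc (k + 1) (k + l), c i := prod_c_pos hc k l
    have hD : 0 < -Real.log (∏ i ∈ Finset.Icc (k + 1) (k + l), c i) :=
      neg_log_prod_c_pos hn hc hnc (by omega)
    have hDge := neg_log_prod_c_ge hn hc hnc k l
    have hPpos : (0:ℝ) < ∏ i ∈ Finset.Icc (k + 1) (k + l), (n i : ℝ) :=
      lt_of_lt_of_le one_pos (one_le_prod_n hn k l)
    have hnum : s₁ * (-Real.log (∏ i ∈ Finset.Icc (k + 1) (k + l), c i)) <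
        Real.log (∏ i ∈ Finset.Icc (k + 1) (k + l), (n i : ℝ)) := by
      rw [moranRatio, lt_div_iff₀ hD] at hratio
      exact hratio
    have hδk0 : moranDelta c k ≠ 0 := ne_of_gt (moranDelta_pos hc k)
    have hrw : 2 * moranDelta c k / moranDelta c (k + l) =
        2 / ∏ i ∈ Finset.Icc (k + 1) (k + l), c i := by
      rw [moranDelta_add]
      field_simp
    rw [hrw] at hcount
    have h2Q : (0:ℝ) < 2 / ∏ i ∈ Finset.Icc (k + 1) (k + l), c i := by positivity
    have hlogcount : Real.log (∏ i ∈ Finset.Icc (k + 1) (k + l), (n i : ℝ)) ≤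
        Real.log (4 * C) + s * (Real.log 2 -
          Real.log (∏ i ∈ Finset.Icc (k + 1) (k + l), c i)) := by
      have h6 := Real.log_le_log hPpos hcount
      rw [Real.log_mul (by positivity) (ne_of_gt (Real.rpow_pos_of_pos h2Q s)),
        Real.log_rpow h2Q,
        Real.log_div (by norm_num) (ne_of_gt hQpos)] at h6
      linarith
    -- combine
    have hcomb : (s₁ - s) * (-Real.log (∏ i ∈ Finset.Icc (k + 1) (k + l), c i)) <
        Real.log (4 * C) + s * Real.log 2 := by nlinarith
    have hDbig : (L₀ : ℝ) * Real.log 2 ≤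
        -Real.log (∏ i ∈ Finset.Icc (k + 1) (k + l), c i) := by
      have h7 : (L₀ : ℝ) ≤ (l : ℝ) := by exact_mod_cast hL₀l
      have h8 : (L₀ : ℝ) * Real.log 2 ≤ (l : ℝ) * Real.log 2 :=
        mul_le_mul_of_nonneg_right h7 hlog2.le
      linarith
    have e : T2 * ((s₁ - s) * Real.log 2) = Real.log (4 * C) + s * Real.log 2 := by
      rw [hT2def, div_mul_cancel₀ _ (ne_of_gt (by positivity))]
    have c1 : (s₁ - s) * ((L₀ : ℝ) * Real.log 2) ≤
        (s₁ - s) * (-Real.log (∏ i ∈ Finset.Icc (k + 1) (k + l), c i)) :=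
      mul_le_mul_of_nonneg_left hDbig hss.le
    have c2 : T2 * ((s₁ - s) * Real.log 2) < (L₀ : ℝ) * ((s₁ - s) * Real.log 2) :=
      mul_lt_mul_of_pos_right hL₀T (by positivity)
    have c3 : (L₀ : ℝ) * ((s₁ - s) * Real.log 2) =
        (s₁ - s) * ((L₀ : ℝ) * Real.log 2) := by ring
    linarith
  have hbdB : BddBelow A := ⟨0, fun s hs => hs.1⟩
  apply le_antisymm
  · apply le_of_forall_pos_le_add
    intro ε hε
    exact csInf_le hbdB (hmem ε hε)
  · exact le_csInf ⟨sstar + 1, hmem 1 one_pos⟩ hlower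
end

section
/- Let E be a homogeneous Moran set determined by a collection of closed intervals fulfilling the homogeneous Moran structure for the sequences {n_k} and {c_k}. If sup_{k≥1} n_k < +∞, then dim_A E ≤ limsup_{l→∞} sup_{k≥1} ( log(n_{k+1}n_{k+2}⋯n_{k+l}) / (−log(c_{k+1}c_{k+2}⋯c_{k+l})) ). -/
open Metric Filter Set
open scoped ENNReal

section MyMoranAux
open MeasureTheory
open scoped Classical

namespace MyMoran


lemma getD_concat_length (l : List ℕ) (a d : ℕ) : (l ++ [a]).getD l.length d = a := by
  rw [List.getD_eq_getElem _ _ (by simp)]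
  exact List.getElem_concat_length (by simp) (by simp)

lemma moranWord_concat_iff (n : ℕ → ℕ) (τ : List ℕ) (i : ℕ) :
    MoranWord n (τ ++ [i]) ↔ MoranWord n τ ∧ 1 ≤ i ∧ i ≤ n (τ.length + 1) := by
  constructor
  · intro h
    refine ⟨fun j hj => ?_, ?_⟩
    · have := h j (by simp; omega)
      rwa [List.getD_append _ _ _ _ hj] at this
    · have := h τ.length (by simp)
      rwa [getD_concat_length] at this
  · rintro ⟨h, h1, h2⟩ j hj
    simp only [List.length_append, List.length_singleton] at hj
    rcases Nat.lt_or_ge j τ.length with hlt | hge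
    · rw [List.getD_append _ _ _ _ hlt]; exact h j hlt
    · have hj' : j = τ.length := by omega
      subst hj'
      rw [getD_concat_length]; exact ⟨h1, h2⟩

lemma moranWord_decomp {n : ℕ → ℕ} {σ : List ℕ} {k : ℕ} (h : MoranWord n σ)
    (hl : σ.length = k + 1) :
    ∃ τ i, MoranWord n τ ∧ τ.length = k ∧ 1 ≤ i ∧ i ≤ n (k + 1) ∧ σ = τ ++ [i] := by
  have hne : σ ≠ [] := by intro h'; rw [h'] at hl; simp at hl
  have hdec := List.dropLast_append_getLast hne
  have hlen : σ.dropLast.length = k := by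
    rw [List.length_dropLast, hl]; rfl
  rw [← hdec] at h
  rw [moranWord_concat_iff] at h
  exact ⟨σ.dropLast, σ.getLast hne, h.1, hlen, by rw [hlen] at h; exact h.2.1,
    by rw [hlen] at h; exact h.2.2, hdec.symm⟩

lemma moranWord_take {n : ℕ → ℕ} {σ : List ℕ} (h : MoranWord n σ) (j : ℕ) :
    MoranWord n (σ.take j) := by
  intro i hi
  simp only [List.length_take] at hi
  have hi2 : i < σ.length := lt_of_lt_of_le hi (min_le_right _ _)
  have hij : i < j := lt_of_lt_of_le hi (min_le_left _ _)
  rw [List.getD_eq_getElem _ _ (by simp; omega), List.getElem_take]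
  have := h i hi2
  rwa [List.getD_eq_getElem _ _ hi2] at this

/-- The finset of Moran words of length `k`. -/
def wordFinset (n : ℕ → ℕ) : ℕ → Finset (List ℕ)
  | 0 => {[]}
  | (k+1) => ((wordFinset n k) ×ˢ Finset.Icc 1 (n (k+1))).image fun p => p.1 ++ [p.2]

lemma mem_wordFinset (n : ℕ → ℕ) (k : ℕ) (σ : List ℕ) :
    σ ∈ wordFinset n k ↔ MoranWord n σ ∧ σ.length = k := by
  induction k generalizing σ with
  | zero =>
    simp only [wordFinset, Finset.mem_singleton, List.length_eq_zero_iff]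
    constructor
    · rintro rfl; exact ⟨fun j hj => by simp at hj, rfl⟩
    · rintro ⟨-, rfl⟩; rfl
  | succ k ih =>
    simp only [wordFinset, Finset.mem_image, Finset.mem_product, Finset.mem_Icc]
    constructor
    · rintro ⟨⟨τ, i⟩, ⟨hτ, h1, h2⟩, rfl⟩
      obtain ⟨hw, hlen⟩ := (ih τ).mp hτ
      refine ⟨(moranWord_concat_iff n τ i).mpr ⟨hw, h1, by rwa [hlen]⟩, by simp [hlen]⟩
    · rintro ⟨hw, hlen⟩
      obtain ⟨τ, i, hτw, hτl, h1, h2, rfl⟩ := moranWord_decomp hw hlen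
      exact ⟨(τ, i), ⟨(ih τ).mpr ⟨hτw, hτl⟩, h1, h2⟩, rfl⟩

/-- fiber counting: words of length `j+l` with a fixed prefix of length `j`. -/
lemma card_fiber_le (n : ℕ → ℕ) (j l : ℕ) (σ : List ℕ) :
    ((wordFinset n (j + l)).filter fun τ => τ.take j = σ).card
      ≤ ∏ i ∈ Finset.Ioc j (j + l), n i := by
  induction l with
  | zero =>
    rw [show j + 0 = j from rfl, Finset.Ioc_self, Finset.prod_empty]
    refine Finset.card_le_one.mpr (fun a ha b hb => ?_) |>.trans le_rfl
    simp only [Finset.mem_filter, mem_wordFinset] at ha hb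
    have ha' : a.take j = a := List.take_of_length_le (by omega)
    have hb' : b.take j = b := List.take_of_length_le (by omega)
    rw [← ha', ha.2, ← hb', hb.2]
  | succ l ih =>
    have : ((wordFinset n (j + (l+1))).filter fun τ => τ.take j = σ) ⊆
        (((wordFinset n (j + l)).filter fun τ => τ.take j = σ) ×ˢ
          Finset.Icc 1 (n (j + l + 1))).image fun p => p.1 ++ [p.2] := by
      intro τ hτ
      simp only [Finset.mem_filter, mem_wordFinset] at hτ
      obtain ⟨⟨hw, hlen⟩, htk⟩ := hτ
      obtain ⟨τ', i, hw', hl', h1, h2, rfl⟩ := moranWord_decomp hw (by omega : τ.length = (j+l) + 1)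
      simp only [Finset.mem_image, Finset.mem_product, Finset.mem_filter, Finset.mem_Icc,
        mem_wordFinset]
      refine ⟨(τ', i), ⟨⟨⟨hw', hl'⟩, ?_⟩, h1, h2⟩, rfl⟩
      rwa [List.take_append_of_le_length (by omega)] at htk
    calc ((wordFinset n (j + (l+1))).filter fun τ => τ.take j = σ).card
        ≤ _ := Finset.card_le_card this
      _ ≤ (((wordFinset n (j + l)).filter fun τ => τ.take j = σ) ×ˢ
          Finset.Icc 1 (n (j + l + 1))).card := Finset.card_image_le
      _ = ((wordFinset n (j + l)).filter fun τ => τ.take j = σ).card * (Finset.Icc 1 (n (j+l+1))).card := Finset.card_product _ _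
      _ ≤ (∏ i ∈ Finset.Ioc j (j + l), n i) * n (j + l + 1) := by
          apply Nat.mul_le_mul ih
          rw [Nat.card_Icc]; omega
      _ = ∏ i ∈ Finset.Ioc j (j + (l+1)), n i := by
          rw [← Finset.Icc_add_one_left_eq_Ioc, ← Finset.Icc_add_one_left_eq_Ioc, show j + (l+1) = (j+l)+1 by omega,
            Finset.prod_Icc_succ_top (by omega)]




variable {n : ℕ → ℕ} {c : ℕ → ℝ}

lemma moranDelta_succ (c : ℕ → ℝ) (k : ℕ) :
    moranDelta c (k + 1) = moranDelta c k * c (k + 1) := by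
  unfold moranDelta
  rw [Finset.prod_Icc_succ_top (by omega)]

lemma moranDelta_pos (hc : ∀ k, 1 ≤ k → 0 < c k) (k : ℕ) : 0 < moranDelta c k := by
  apply Finset.prod_pos
  intro i hi
  exact hc i (Finset.mem_Icc.mp hi).1

lemma c_lt_half (hn : ∀ k, 1 ≤ k → 2 ≤ n k) (hc : ∀ k, 1 ≤ k → 0 < c k)
    (hnc : ∀ k, 1 ≤ k → (n k : ℝ) * c k < 1) (k : ℕ) (hk : 1 ≤ k) : c k < 1 / 2 := by
  have h1 := hnc k hk
  have h2 : (2 : ℝ) ≤ n k := by exact_mod_cast hn k hk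
  have h3 := hc k hk
  nlinarith

lemma moranDelta_le (hn : ∀ k, 1 ≤ k → 2 ≤ n k) (hc : ∀ k, 1 ≤ k → 0 < c k)
    (hnc : ∀ k, 1 ≤ k → (n k : ℝ) * c k < 1) (k : ℕ) :
    moranDelta c k ≤ (1 / 2 : ℝ) ^ k := by
  induction k with
  | zero => simp [moranDelta]
  | succ k ih =>
    rw [moranDelta_succ, pow_succ]
    have h1 : c (k + 1) < 1 / 2 := c_lt_half hn hc hnc (k + 1) (by omega)
    have h2 : 0 < moranDelta c k := moranDelta_pos hc k
    have h3 : 0 < c (k + 1) := hc (k + 1) (by omega)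
    nlinarith [pow_pos (by norm_num : (0:ℝ) < 1/2) k]

variable (S : HomMoranStructure n c)

lemma diam_eq (σ : List ℕ) (hw : MoranWord n σ) :
    Metric.diam (S.I σ) = moranDelta c σ.length := by
  induction σ using List.reverseRecOn with
  | nil => rw [S.root, Real.diam_Icc (by norm_num)]; simp [moranDelta]
  | append_singleton τ i ih =>
    rw [moranWord_concat_iff] at hw
    obtain ⟨hτ, h1, h2⟩ := hw
    rw [S.ratio τ hτ i h1 h2, ih hτ]
    simp only [List.length_append, List.length_singleton]
    rw [moranDelta_succ]
    ring

lemma interval (σ : List ℕ) (hw : MoranWord n σ) :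
    ∃ a b : ℝ, a ≤ b ∧ S.I σ = Set.Icc a b ∧ b - a = moranDelta c σ.length := by
  obtain ⟨a, b, hab, hI⟩ := S.isClosedInterval σ hw
  refine ⟨a, b, hab, hI, ?_⟩
  have := diam_eq S σ hw
  rwa [hI, Real.diam_Icc hab] at this

lemma I_take_subset (σ : List ℕ) (hw : MoranWord n σ) (j : ℕ) :
    S.I σ ⊆ S.I (σ.take j) := by
  induction σ using List.reverseRecOn with
  | nil => simp
  | append_singleton τ i ih =>
    rw [moranWord_concat_iff] at hw
    obtain ⟨hτ, h1, h2⟩ := hw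
    rcases Nat.lt_or_ge τ.length j with hlt | hge
    · rcases Nat.lt_or_ge (τ.length + 1) (j+1) with h' | h'
      · rw [List.take_of_length_le (by simp; omega)]
      · have : j = τ.length + 1 := by omega
        rw [this, List.take_of_length_le (by simp)]
    · rw [List.take_append_of_le_length hge]
      exact (S.subset τ hτ i h1 h2).trans (ih hτ)

lemma interior_disj :
    ∀ k (σ τ : List ℕ), MoranWord n σ → MoranWord n τ → σ.length = k → τ.length = k →
      σ ≠ τ → interior (S.I σ) ∩ interior (S.I τ) = ∅ := by
  intro k
  induction k with
  | zero =>
    intro σ τ _ _ hσ hτ hne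
    exact absurd (by rw [List.length_eq_zero_iff] at hσ hτ; rw [hσ, hτ]) hne
  | succ k ih =>
    intro σ τ hσw hτw hσl hτl hne
    have hσne : σ ≠ [] := by intro h; rw [h] at hσl; simp at hσl
    have hτne : τ ≠ [] := by intro h; rw [h] at hτl; simp at hτl
    obtain ⟨σ', i, rfl⟩ : ∃ σ' i, σ = σ' ++ [i] :=
      ⟨σ.dropLast, σ.getLast hσne, (List.dropLast_append_getLast hσne).symm⟩
    obtain ⟨τ', j, rfl⟩ : ∃ τ' j, τ = τ' ++ [j] :=
      ⟨τ.dropLast, τ.getLast hτne, (List.dropLast_append_getLast hτne).symm⟩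
    rw [moranWord_concat_iff] at hσw hτw
    obtain ⟨hσ'w, hi1, hi2⟩ := hσw
    obtain ⟨hτ'w, hj1, hj2⟩ := hτw
    have hσ'l : σ'.length = k := by simp at hσl; omega
    have hτ'l : τ'.length = k := by simp at hτl; omega
    by_cases hpre : σ' = τ'
    · subst hpre
      have hij : i ≠ j := by intro h; rw [h] at hne; exact hne rfl
      rcases Nat.lt_or_ge i j with h' | h'
      · exact S.disj σ' hσ'w i j hi1 h' hj2
      · have h'' : j < i := by omega
        rw [Set.inter_comm]
        exact S.disj σ' hσ'w j i hj1 h'' hi2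
    · have hdisj := ih σ' τ' hσ'w hτ'w hσ'l hτ'l hpre
      have h1 : interior (S.I (σ' ++ [i])) ⊆ interior (S.I σ') :=
        interior_mono (S.subset σ' hσ'w i hi1 hi2)
      have h2 : interior (S.I (τ' ++ [j])) ⊆ interior (S.I τ') :=
        interior_mono (S.subset τ' hτ'w j hj1 hj2)
      rw [← Set.subset_empty_iff, ← hdisj]
      exact Set.inter_subset_inter h1 h2

lemma card_level_le (hc : ∀ k, 1 ≤ k → 0 < c k) (S : HomMoranStructure n c)
    (x R : ℝ) (hR : 0 < R) (j : ℕ) (hd : R ≤ moranDelta c j) :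
    ((wordFinset n j).filter fun σ => (S.I σ ∩ Metric.ball x R).Nonempty).card ≤ 4 := by
  set d := moranDelta c j with hdd
  have hd0 : 0 < d := moranDelta_pos hc j
  set G := (wordFinset n j).filter fun σ => (S.I σ ∩ Metric.ball x R).Nonempty with hG
  -- each interior has volume ofReal d and is inside the window
  have hvol : ∀ σ ∈ G, volume (interior (S.I σ)) = ENNReal.ofReal d := by
    intro σ hσ
    rw [hG, Finset.mem_filter, mem_wordFinset] at hσ
    obtain ⟨a, b, hab, hI, hba⟩ := interval S σ hσ.1.1
    rw [hI, interior_Icc, Real.volume_Ioo, hba, hσ.1.2]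
  have hsub : ∀ σ ∈ G, interior (S.I σ) ⊆ Set.Icc (x - R - d) (x + R + d) := by
    intro σ hσ
    rw [hG, Finset.mem_filter, mem_wordFinset] at hσ
    obtain ⟨⟨hw, hlen⟩, y, hyI, hyB⟩ := hσ
    obtain ⟨a, b, hab, hI, hba⟩ := interval S σ hw
    rw [hlen, ← hdd] at hba
    rw [hI] at hyI ⊢
    rw [Metric.mem_ball, Real.dist_eq, abs_lt] at hyB
    intro z hz
    have hz' : z ∈ Set.Icc a b := interior_subset hz
    simp only [Set.mem_Icc] at hz' hyI ⊢
    constructor <;> nlinarith [hz'.1, hz'.2, hyI.1, hyI.2, hyB.1, hyB.2]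
  have hdisj : (G : Set (List ℕ)).PairwiseDisjoint fun σ => interior (S.I σ) := by
    intro σ hσ τ hτ hne
    rw [Finset.mem_coe, hG, Finset.mem_filter, mem_wordFinset] at hσ hτ
    rw [Function.onFun, Set.disjoint_iff_inter_eq_empty]
    exact interior_disj S j σ τ hσ.1.1 hτ.1.1 hσ.1.2 hτ.1.2 hne
  have hmeas : volume (⋃ σ ∈ G, interior (S.I σ)) = ∑ σ ∈ G, volume (interior (S.I σ)) :=
    measure_biUnion_finset hdisj (fun σ _ => isOpen_interior.measurableSet)
  have hsum : ∑ σ ∈ G, volume (interior (S.I σ)) = G.card * ENNReal.ofReal d := by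
    rw [Finset.sum_congr rfl hvol, Finset.sum_const, nsmul_eq_mul]
  have hle : (G.card : ℝ≥0∞) * ENNReal.ofReal d ≤ ENNReal.ofReal (x + R + d - (x - R - d)) := by
    rw [← hsum, ← hmeas, ← Real.volume_Icc]
    exact measure_mono (Set.iUnion₂_subset hsub)
  have h4 : ENNReal.ofReal (x + R + d - (x - R - d)) ≤ 4 * ENNReal.ofReal d := by
    have : (4 : ℝ≥0∞) * ENNReal.ofReal d = ENNReal.ofReal (4 * d) := by
      rw [ENNReal.ofReal_mul (by norm_num)]
      norm_num
    rw [this]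
    apply ENNReal.ofReal_le_ofReal
    nlinarith
  have : (G.card : ℝ≥0∞) ≤ 4 := by
    have := hle.trans h4
    exact (ENNReal.mul_le_mul_iff_left (by simp [hd0]) ENNReal.ofReal_ne_top).mp this
  exact_mod_cast this
lemma covering_core (hc : ∀ k, 1 ≤ k → 0 < c k) (S : HomMoranStructure n c)
    (x r R : ℝ) (hr : 0 < r) (hR : 0 < R) (j m : ℕ) (hjm : j ≤ m) (hm : 1 ≤ m)
    (hdj : R ≤ moranDelta c j) (hdm : moranDelta c m < r) :
    coveringNumber r (Metric.ball x R ∩ moranSet S)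
      ≤ ((4 * ∏ i ∈ Finset.Ioc j m, n i : ℕ) : ℝ≥0∞) := by
  set F := (wordFinset n m).filter (fun τ => (S.I τ ∩ Metric.ball x R).Nonempty) with hF
  set G := (wordFinset n j).filter (fun σ => (S.I σ ∩ Metric.ball x R).Nonempty) with hG
  -- card bound
  have himage : F.image (fun τ => τ.take j) ⊆ G := by
    intro σ hσ
    rw [Finset.mem_image] at hσ
    obtain ⟨τ, hτ, rfl⟩ := hσ
    rw [hF, Finset.mem_filter, mem_wordFinset] at hτ
    obtain ⟨⟨hw, hlen⟩, y, hy1, hy2⟩ := hτ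
    rw [hG, Finset.mem_filter, mem_wordFinset]
    refine ⟨⟨moranWord_take hw j, ?_⟩, y, I_take_subset S τ hw j hy1, hy2⟩
    rw [List.length_take, hlen]
    omega
  have hcardF : F.card ≤ (∏ i ∈ Finset.Ioc j m, n i) * 4 := by
    have h1 : F.card ≤ (∏ i ∈ Finset.Ioc j m, n i) * (F.image (fun τ => τ.take j)).card := by
      apply Finset.card_le_mul_card_image
      intro σ _
      calc (F.filter fun τ => τ.take j = σ).card
          ≤ ((wordFinset n m).filter fun τ => τ.take j = σ).card := by
            apply Finset.card_le_card
            intro τ hτ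
            rw [Finset.mem_filter] at hτ ⊢
            rw [hF, Finset.mem_filter] at hτ
            exact ⟨hτ.1.1, hτ.2⟩
        _ ≤ ∏ i ∈ Finset.Ioc j m, n i := by
            have := card_fiber_le n j (m - j) σ
            rwa [Nat.add_sub_cancel' hjm] at this
    have h2 : (F.image (fun τ => τ.take j)).card ≤ 4 :=
      (Finset.card_le_card himage).trans (card_level_le hc S x R hR j hdj)
    calc F.card ≤ _ := h1
      _ ≤ (∏ i ∈ Finset.Ioc j m, n i) * 4 := Nat.mul_le_mul_left _ h2
  -- coverage
  set T := F.image (fun τ => (sInf (S.I τ) + sSup (S.I τ)) / 2) with hT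
  have hcover : Metric.ball x R ∩ moranSet S ⊆ ⋃ y ∈ T, Metric.ball y r := by
    rintro z ⟨hzB, hzE⟩
    rw [moranSet, Set.mem_iInter] at hzE
    have hz := hzE (m - 1)
    rw [Set.mem_iUnion] at hz
    obtain ⟨τ, hz⟩ := hz
    rw [Set.mem_iUnion] at hz
    obtain ⟨⟨hw, hlen⟩, hzI⟩ := hz
    have hlen' : τ.length = m := by omega
    have hτF : τ ∈ F := by
      rw [hF, Finset.mem_filter, mem_wordFinset]
      exact ⟨⟨hw, hlen'⟩, z, hzI, hzB⟩
    obtain ⟨a, b, hab, hI, hba⟩ := interval S τ hw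
    rw [hlen'] at hba
    have hmid : (sInf (S.I τ) + sSup (S.I τ)) / 2 = (a + b) / 2 := by
      rw [hI, csInf_Icc hab, csSup_Icc hab]
    rw [Set.mem_iUnion₂]
    refine ⟨(sInf (S.I τ) + sSup (S.I τ)) / 2, Finset.mem_image_of_mem _ hτF, ?_⟩
    rw [hmid, Metric.mem_ball, Real.dist_eq, abs_lt]
    rw [hI, Set.mem_Icc] at hzI
    have hd0 : 0 < moranDelta c m := moranDelta_pos hc m
    constructor <;> nlinarith [hzI.1, hzI.2]
  -- conclude
  have hcov : coveringNumber r (Metric.ball x R ∩ moranSet S) ≤ (T.card : ℝ≥0∞) :=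
    sInf_le ⟨T, rfl, hcover⟩
  refine hcov.trans ?_
  have : T.card ≤ 4 * ∏ i ∈ Finset.Ioc j m, n i := by
    calc T.card ≤ F.card := Finset.card_image_le
      _ ≤ (∏ i ∈ Finset.Ioc j m, n i) * 4 := hcardF
      _ = 4 * ∏ i ∈ Finset.Ioc j m, n i := Nat.mul_comm _ _
  exact_mod_cast this

end MyMoran
end MyMoranAux

set_option maxHeartbeats 1000000

/-- If `E` is a homogeneous Moran set with `sup_k n_k < ∞`, then
`dim_A E ≤ limsup_{l→∞} sup_{k≥1} log(n_{k+1}⋯n_{k+l}) / (−log(c_{k+1}⋯c_{k+l}))`. -/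
theorem assouadDim_homMoran_le (n : ℕ → ℕ) (c : ℕ → ℝ)
    (hn : ∀ k, 1 ≤ k → 2 ≤ n k) (hc : ∀ k, 1 ≤ k → 0 < c k)
    (hnc : ∀ k, 1 ≤ k → (n k : ℝ) * c k < 1)
    (S : HomMoranStructure n c) (E : Set ℝ) (hE : E = moranSet S)
    (hsup : ∃ M : ℕ, ∀ k, 1 ≤ k → n k ≤ M) :
    assouadDim E ≤
      Filter.limsup (fun l : ℕ => ⨆ k : ℕ, moranRatio n c (k + 1) l) Filter.atTop := by
  classical
  obtain ⟨M, hM⟩ := hsup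
  have hM2 : 2 ≤ M := le_trans (hn 1 le_rfl) (hM 1 le_rfl)
  have hM1R : (1 : ℝ) ≤ M := by exact_mod_cast Nat.one_le_of_lt hM2
  have hlog2 : (0 : ℝ) < Real.log 2 := Real.log_pos (by norm_num)
  set K : ℝ := Real.log M / Real.log 2 with hK
  have hK0 : 0 ≤ K := div_nonneg (Real.log_nonneg hM1R) hlog2.le
  -- uniform bounds on the ratios
  have hprod_n_pos : ∀ a b : ℕ, (0:ℝ) < ∏ i ∈ Finset.Ioc a b, (n i : ℝ) := by
    intro a b
    apply Finset.prod_pos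
    intro i hi
    have : 1 ≤ i := by have := (Finset.mem_Ioc.mp hi).1; omega
    have := hn i this
    positivity
  have hprod_c_pos : ∀ a b : ℕ, (0:ℝ) < ∏ i ∈ Finset.Ioc a b, c i := by
    intro a b
    apply Finset.prod_pos
    intro i hi
    exact hc i (by have := (Finset.mem_Ioc.mp hi).1; omega)
  have hchalf : ∀ i, 1 ≤ i → c i < 1/2 := MyMoran.c_lt_half hn hc hnc
  have hratio_bounds : ∀ a l : ℕ, 1 ≤ a → 1 ≤ l →
      (l : ℝ) * Real.log 2 ≤ Real.log (∏ i ∈ Finset.Ioc a (a + l), (n i : ℝ)) ∧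
      Real.log (∏ i ∈ Finset.Ioc a (a + l), (n i : ℝ)) ≤ (l : ℝ) * Real.log M ∧
      (l : ℝ) * Real.log 2 ≤ -Real.log (∏ i ∈ Finset.Ioc a (a + l), c i) := by
    intro a l ha hl
    have hcard : (Finset.Ioc a (a + l)).card = l := by
      rw [Nat.card_Ioc]; omega
    have h2l : (2:ℝ) ^ l ≤ ∏ i ∈ Finset.Ioc a (a + l), (n i : ℝ) := by
      calc (2:ℝ) ^ l = ∏ _i ∈ Finset.Ioc a (a + l), (2:ℝ) := by
            rw [Finset.prod_const, hcard]
        _ ≤ _ := Finset.prod_le_prod (by intros; norm_num) (by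
            intro i hi
            exact_mod_cast hn i (by have := (Finset.mem_Ioc.mp hi).1; omega))
    have hMl : ∏ i ∈ Finset.Ioc a (a + l), (n i : ℝ) ≤ (M:ℝ) ^ l := by
      calc ∏ i ∈ Finset.Ioc a (a + l), (n i : ℝ)
          ≤ ∏ _i ∈ Finset.Ioc a (a + l), (M:ℝ) := Finset.prod_le_prod
            (by intro i hi; positivity)
            (by intro i hi; exact_mod_cast hM i (by have := (Finset.mem_Ioc.mp hi).1; omega))
        _ = (M:ℝ) ^ l := by rw [Finset.prod_const, hcard]
    have hcl : ∏ i ∈ Finset.Ioc a (a + l), c i ≤ (1/2:ℝ) ^ l := by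
      calc ∏ i ∈ Finset.Ioc a (a + l), c i
          ≤ ∏ _i ∈ Finset.Ioc a (a + l), (1/2:ℝ) := Finset.prod_le_prod
            (by intro i hi; exact (hc i (by have := (Finset.mem_Ioc.mp hi).1; omega)).le)
            (by intro i hi; exact (hchalf i (by have := (Finset.mem_Ioc.mp hi).1; omega)).le)
        _ = (1/2:ℝ) ^ l := by rw [Finset.prod_const, hcard]
    refine ⟨?_, ?_, ?_⟩
    · calc (l:ℝ) * Real.log 2 = Real.log ((2:ℝ) ^ l) := by rw [Real.log_pow]
        _ ≤ _ := Real.log_le_log (by positivity) h2l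
    · calc Real.log (∏ i ∈ Finset.Ioc a (a + l), (n i : ℝ))
          ≤ Real.log ((M:ℝ) ^ l) := Real.log_le_log (hprod_n_pos a (a+l)) hMl
        _ = (l:ℝ) * Real.log M := by rw [Real.log_pow]
    · have := Real.log_le_log (hprod_c_pos a (a+l)) hcl
      rw [Real.log_pow] at this
      have h12 : Real.log (1/2 : ℝ) = -Real.log 2 := by
        rw [Real.log_div one_ne_zero (by norm_num), Real.log_one]; ring
      rw [h12] at this
      push_cast at this ⊢
      linarith
  -- bounds for the moranRatio
  have hmr : ∀ a l : ℕ, 1 ≤ a → 0 ≤ moranRatio n c a l ∧ moranRatio n c a l ≤ K := by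
    intro a l ha
    rcases Nat.eq_zero_or_pos l with rfl | hl
    · rw [moranRatio]
      rw [Finset.Icc_eq_empty (by omega)]
      simp [hK0]
    · obtain ⟨h1, h2, h3⟩ := hratio_bounds a l ha hl
      rw [moranRatio, Finset.Icc_add_one_left_eq_Ioc]
      have hlR : (0:ℝ) < l := by exact_mod_cast hl
      have hB : (0:ℝ) < -Real.log (∏ i ∈ Finset.Ioc a (a + l), c i) := by nlinarith
      constructor
      · apply div_nonneg _ hB.le
        nlinarith
      · rw [hK]
        calc Real.log (∏ i ∈ Finset.Ioc a (a + l), (n i : ℝ)) /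
              (-Real.log (∏ i ∈ Finset.Ioc a (a + l), c i))
            ≤ ((l:ℝ) * Real.log M) / ((l:ℝ) * Real.log 2) := by
              apply div_le_div₀ (by nlinarith) h2 (by nlinarith) h3
          _ = Real.log M / Real.log 2 := mul_div_mul_left _ _ (ne_of_gt hlR)
  set f : ℕ → ℝ := fun l => ⨆ k : ℕ, moranRatio n c (k + 1) l with hf
  have hbdda : ∀ l, BddAbove (Set.range fun k : ℕ => moranRatio n c (k + 1) l) := by
    intro l
    refine ⟨K, ?_⟩
    rintro _ ⟨k, rfl⟩
    exact (hmr (k+1) l (by omega)).2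
  have hfK : ∀ l, f l ≤ K := fun l => ciSup_le fun k => (hmr (k+1) l (by omega)).2
  have hf0 : ∀ l, 0 ≤ f l := fun l =>
    le_trans (hmr 1 l le_rfl).1 (le_ciSup (hbdda l) 0)
  have hbdd : Filter.IsBoundedUnder (· ≤ ·) Filter.atTop f :=
    Filter.isBoundedUnder_of ⟨K, hfK⟩
  set L := Filter.limsup f Filter.atTop with hL
  have hL0 : 0 ≤ L :=
    Filter.le_limsup_of_frequently_le ((Filter.Eventually.of_forall hf0).frequently) hbdd
  -- delta facts
  have hd_pos : ∀ k, 0 < moranDelta c k := MyMoran.moranDelta_pos hc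
  have hd_le : ∀ k, moranDelta c k ≤ (1/2:ℝ)^k := MyMoran.moranDelta_le hn hc hnc
  have hd_Ioc : ∀ k : ℕ, moranDelta c k = ∏ i ∈ Finset.Ioc 0 k, c i := by
    intro k; rw [moranDelta, ← Finset.Icc_add_one_left_eq_Ioc, zero_add]
  -- key estimate
  have key : ∀ s : ℝ, 0 ≤ s → ∀ a l : ℕ, 1 ≤ a → 1 ≤ l → moranRatio n c a l < s →
      (∏ i ∈ Finset.Ioc a (a + l), (n i : ℝ))
        ≤ (moranDelta c a / moranDelta c (a + l)) ^ s := by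
    intro s hs a l ha hl hlt
    obtain ⟨h1, h2, h3⟩ := hratio_bounds a l ha hl
    set P := ∏ i ∈ Finset.Ioc a (a + l), c i with hP
    set A := Real.log (∏ i ∈ Finset.Ioc a (a + l), (n i : ℝ)) with hA
    have hlR : (0:ℝ) < l := by exact_mod_cast hl
    have hB : (0:ℝ) < -Real.log P := by nlinarith
    rw [moranRatio, Finset.Icc_add_one_left_eq_Ioc] at hlt
    have hAsB : A < s * (-Real.log P) := (div_lt_iff₀ hB).mp hlt
    have hdelta : moranDelta c (a + l) = moranDelta c a * P := by
      rw [hd_Ioc, hd_Ioc, hP]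
      exact (Finset.prod_Ioc_consecutive c (Nat.zero_le a) (Nat.le_add_right a l)).symm
    have hPpos : 0 < P := hprod_c_pos a (a+l)
    have hquot : moranDelta c a / moranDelta c (a + l) = P⁻¹ := by
      rw [hdelta, div_mul_eq_div_div, div_self (ne_of_gt (hd_pos a)), one_div]
    rw [hquot, Real.rpow_def_of_pos (inv_pos.mpr hPpos), Real.log_inv]
    calc (∏ i ∈ Finset.Ioc a (a + l), (n i : ℝ))
        = Real.exp A := (Real.exp_log (hprod_n_pos a (a+l))).symm
      _ ≤ Real.exp (-Real.log P * s) := Real.exp_le_exp.mpr (by nlinarith)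
  -- main argument
  apply le_of_forall_pos_le_add
  intro ε hε
  set s := L + ε with hs
  have hs0 : 0 ≤ s := by rw [hs]; linarith
  have hLs : L < s := by rw [hs]; linarith
  obtain ⟨l₀, hl₀⟩ := Filter.eventually_atTop.mp (Filter.eventually_lt_of_limsup_lt hLs hbdd)
  set l₁ := max l₀ 1 with hl₁
  have hratio_lt : ∀ a l : ℕ, 1 ≤ a → l₁ ≤ l → moranRatio n c a l < s := by
    intro a l ha hl
    have h1 : moranRatio n c a l ≤ f l := by
      have : moranRatio n c ((a-1) + 1) l ≤ f l := le_ciSup (hbdda l) (a-1)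
      rwa [Nat.sub_add_cancel ha] at this
    exact lt_of_le_of_lt h1 (hl₀ l (le_trans (le_max_left _ _) hl))
  set C : ℝ := 4 * (M:ℝ) ^ (l₁ + 2) with hC
  have hCpos : 0 < C := by positivity
  have hmem : s ∈ {s : ℝ | 0 ≤ s ∧ ∃ b > (0 : ℝ), ∃ C > (0 : ℝ), ∀ r R : ℝ, 0 < r → r < R → R < b →
      ∀ x ∈ E, coveringNumber r (Metric.ball x R ∩ E) ≤ ENNReal.ofReal (C * (R / r) ^ s)} := by
    refine ⟨hs0, 1, one_pos, C, hCpos, ?_⟩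
    intro r R hr hrR hR1 x hx
    -- choose the levels
    have hfindR : ∃ k, moranDelta c k < R := by
      obtain ⟨i, hi⟩ := exists_pow_lt_of_lt_one (lt_trans hr hrR) (by norm_num : (1/2:ℝ) < 1)
      exact ⟨i, lt_of_le_of_lt (hd_le i) hi⟩
    have hfindr : ∃ m, moranDelta c m < r := by
      obtain ⟨i, hi⟩ := exists_pow_lt_of_lt_one hr (by norm_num : (1/2:ℝ) < 1)
      exact ⟨i, lt_of_le_of_lt (hd_le i) hi⟩
    set k := Nat.find hfindR with hkdef
    set m := Nat.find hfindr with hmdef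
    have hk_spec : moranDelta c k < R := Nat.find_spec hfindR
    have hm_spec : moranDelta c m < r := Nat.find_spec hfindr
    have hk1 : 1 ≤ k := by
      by_contra h
      have hk0 : k = 0 := by omega
      have := hk_spec
      rw [hk0] at this
      simp [moranDelta] at this
      linarith
    have hm1 : 1 ≤ m := by
      by_contra h
      have hm0 : m = 0 := by omega
      have := hm_spec
      rw [hm0] at this
      simp [moranDelta] at this
      linarith
    have hkprev : R ≤ moranDelta c (k - 1) :=
      le_of_not_gt (Nat.find_min hfindR (by omega))
    have hmprev : r ≤ moranDelta c (m - 1) :=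
      le_of_not_gt (Nat.find_min hfindr (by omega))
    have hkm : k ≤ m := Nat.find_min' hfindR (lt_trans hm_spec hrR)
    -- covering core
    rw [hE]
    have hcore := MyMoran.covering_core hc S x r R hr (lt_trans hr hrR) (k-1) m
      (by omega) hm1 hkprev hm_spec
    refine hcore.trans ?_
    rw [← ENNReal.ofReal_natCast]
    apply ENNReal.ofReal_le_ofReal
    push_cast
    -- the real inequality
    have hRr : 1 ≤ R / r := by
      rw [le_div_iff₀ hr]; linarith
    have hRrs : 1 ≤ (R / r) ^ s := Real.one_le_rpow hRr hs0
    have hRrs0 : 0 ≤ (R / r) ^ s := by linarith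
    rcases Nat.lt_or_ge m (k + l₁ + 1) with hcase | hcase
    · -- small case
      have hprod : (∏ i ∈ Finset.Ioc (k-1) m, (n i : ℝ)) ≤ (M:ℝ) ^ (l₁ + 2) := by
        calc (∏ i ∈ Finset.Ioc (k-1) m, (n i : ℝ))
            ≤ ∏ _i ∈ Finset.Ioc (k-1) m, (M:ℝ) := Finset.prod_le_prod
              (by intro i hi; positivity)
              (by intro i hi
                  exact_mod_cast hM i (by have := (Finset.mem_Ioc.mp hi).1; omega))
          _ = (M:ℝ) ^ (Finset.Ioc (k-1) m).card := by rw [Finset.prod_const]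
          _ ≤ (M:ℝ) ^ (l₁ + 2) := by
              apply pow_le_pow_right₀ hM1R
              rw [Nat.card_Ioc]; omega
      calc 4 * ∏ i ∈ Finset.Ioc (k-1) m, (n i : ℝ)
          ≤ 4 * (M:ℝ) ^ (l₁ + 2) := by nlinarith
        _ = C := hC.symm
        _ ≤ C * (R / r) ^ s := le_mul_of_one_le_right hCpos.le hRrs
    · -- large case
      set l := m - 1 - k with hldef
      have hll₁ : l₁ ≤ l := by omega
      have hl1 : 1 ≤ l := by omega
      have hkl : k + l = m - 1 := by omega
      have hXbound : (∏ i ∈ Finset.Ioc k (m-1), (n i : ℝ)) ≤ (R / r) ^ s := by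
        have hkey := key s hs0 k l hk1 hl1 (hratio_lt k l hk1 hll₁)
        rw [hkl] at hkey
        refine hkey.trans ?_
        have hbase : moranDelta c k / moranDelta c (m-1) ≤ R / r :=
          div_le_div₀ (by linarith [hr, hrR, hk_spec, hd_pos k]) hk_spec.le hr hmprev
        exact Real.rpow_le_rpow (div_nonneg (hd_pos k).le (hd_pos (m-1)).le) hbase hs0
      -- split the product
      have hsplit : (∏ i ∈ Finset.Ioc (k-1) m, (n i : ℝ))
          = (n k : ℝ) * (∏ i ∈ Finset.Ioc k (m-1), (n i : ℝ)) * (n m : ℝ) := by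
        have e1 : (∏ i ∈ Finset.Ioc (k-1) (m-1), (n i : ℝ)) * (∏ i ∈ Finset.Ioc (m-1) m, (n i : ℝ))
            = ∏ i ∈ Finset.Ioc (k-1) m, (n i : ℝ) :=
          Finset.prod_Ioc_consecutive _ (by omega) (by omega)
        have e2 : (∏ i ∈ Finset.Ioc (k-1) k, (n i : ℝ)) * (∏ i ∈ Finset.Ioc k (m-1), (n i : ℝ))
            = ∏ i ∈ Finset.Ioc (k-1) (m-1), (n i : ℝ) :=
          Finset.prod_Ioc_consecutive _ (by omega) (by omega)
        have e3 : Finset.Ioc (k-1) k = {k} := by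
          ext i; simp only [Finset.mem_Ioc, Finset.mem_singleton]; omega
        have e4 : Finset.Ioc (m-1) m = {m} := by
          ext i; simp only [Finset.mem_Ioc, Finset.mem_singleton]; omega
        rw [← e1, ← e2, e3, e4, Finset.prod_singleton, Finset.prod_singleton]
      have hnkM : (n k : ℝ) ≤ M := by exact_mod_cast hM k hk1
      have hnmM : (n m : ℝ) ≤ M := by exact_mod_cast hM m hm1
      have hnk0 : (0:ℝ) ≤ n k := by positivity
      have hnm0 : (0:ℝ) ≤ n m := by positivity
      have hX0 : (0:ℝ) ≤ ∏ i ∈ Finset.Ioc k (m-1), (n i : ℝ) := le_of_lt (hprod_n_pos _ _)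
      have hM2e : (M:ℝ)^2 ≤ (M:ℝ) ^ (l₁ + 2) := pow_le_pow_right₀ hM1R (by omega)
      calc 4 * ∏ i ∈ Finset.Ioc (k-1) m, (n i : ℝ)
          = 4 * ((n k : ℝ) * (∏ i ∈ Finset.Ioc k (m-1), (n i : ℝ)) * (n m : ℝ)) := by
            rw [hsplit]
        _ ≤ 4 * ((M:ℝ) * ((R / r) ^ s) * (M:ℝ)) := by
            apply mul_le_mul_of_nonneg_left _ (by norm_num)
            apply mul_le_mul (mul_le_mul hnkM hXbound hX0 (by linarith)) hnmM hnm0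
            positivity
        _ = 4 * (M:ℝ)^2 * (R / r) ^ s := by ring
        _ ≤ C * (R / r) ^ s := by
            apply mul_le_mul_of_nonneg_right _ hRrs0
            rw [hC]
            linarith [hM2e]
  -- conclude via sInf
  have hbddb : BddBelow {s : ℝ | 0 ≤ s ∧ ∃ b > (0 : ℝ), ∃ C > (0 : ℝ), ∀ r R : ℝ, 0 < r → r < R → R < b →
      ∀ x ∈ E, coveringNumber r (Metric.ball x R ∩ E) ≤ ENNReal.ofReal (C * (R / r) ^ s)} :=
    ⟨0, fun t ht => ht.1⟩
  exact csInf_le hbddb hmem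
end

section
/- Let E be a Cantor-like set with data J, {c_k}, {n_k}, {a_k}. Then sup_{k≥1} n_k < +∞. -/
open Metric Filter Set MeasureTheory
open scoped ENNReal RealInnerProductSpace

/-- A Cantor-like structure with data `J = J []`, `{cₖ}`, `{nₖ}`, `{aₖ}`:
a family of sets `J_σ ⊆ ℝ^d`, each child geometrically similar to its parent
(the image of the parent under a similarity transformation of `ℝ^d`), with
pairwise disjoint interiors and diameter ratios between `cₖ(1−aₖ)` and `cₖ(1+aₖ)`. -/
structure CantorLikeStructure (d : ℕ) (c : ℕ → ℝ) (n : ℕ → ℕ) (a : ℕ → ℝ) where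
  J : List ℕ → Set (EuclideanSpace ℝ (Fin d))
  closed_root : IsClosed (J [])
  interior_root : (interior (J [])).Nonempty
  bounded_root : Bornology.IsBounded (J [])
  subset : ∀ σ, MoranWord n σ → ∀ j, 1 ≤ j → j ≤ n (σ.length + 1) → J (σ ++ [j]) ⊆ J σ
  similar : ∀ σ, MoranWord n σ → ∀ j, 1 ≤ j → j ≤ n (σ.length + 1) →
    ∃ r : ℝ, 0 < r ∧ ∃ f : EuclideanSpace ℝ (Fin d) → EuclideanSpace ℝ (Fin d),
      (∀ x y, dist (f x) (f y) = r * dist x y) ∧ J (σ ++ [j]) = f '' J σ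
  disj : ∀ σ, MoranWord n σ → ∀ j₁ j₂, 1 ≤ j₁ → j₁ < j₂ → j₂ ≤ n (σ.length + 1) →
    interior (J (σ ++ [j₁])) ∩ interior (J (σ ++ [j₂])) = ∅
  ratio_lb : ∀ σ, MoranWord n σ → ∀ j, 1 ≤ j → j ≤ n (σ.length + 1) →
    c (σ.length + 1) * (1 - a (σ.length + 1)) * Metric.diam (J σ) ≤ Metric.diam (J (σ ++ [j]))
  ratio_ub : ∀ σ, MoranWord n σ → ∀ j, 1 ≤ j → j ≤ n (σ.length + 1) →
    Metric.diam (J (σ ++ [j])) ≤ c (σ.length + 1) * (1 + a (σ.length + 1)) * Metric.diam (J σ)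

/-- The Cantor-like set `E = ⋂_{k≥1} ⋃_{σ∈Ωₖ} J_σ`. -/
def cantorLikeSet {d : ℕ} {c : ℕ → ℝ} {n : ℕ → ℕ} {a : ℕ → ℝ}
    (S : CantorLikeStructure d c n a) : Set (EuclideanSpace ℝ (Fin d)) :=
  ⋂ k : ℕ, ⋃ σ : List ℕ, ⋃ _ : MoranWord n σ ∧ σ.length = k + 1, S.J σ

section Aux

variable {d : ℕ}

/-- A similarity of Euclidean space is surjective. -/
lemma CantorAux.scaling_surjective (f : EuclideanSpace ℝ (Fin d) → EuclideanSpace ℝ (Fin d))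
    {r : ℝ} (hr : 0 < r) (hf : ∀ x y, dist (f x) (f y) = r * dist x y) :
    Function.Surjective f := by
  set g : EuclideanSpace ℝ (Fin d) → EuclideanSpace ℝ (Fin d) :=
    fun x => r⁻¹ • (f x - f 0) with hg
  have hgdist : ∀ x y, dist (g x) (g y) = dist x y := by
    intro x y
    have h1 : g x - g y = r⁻¹ • (f x - f y) := by
      simp only [hg, ← smul_sub]; congr 1; abel
    rw [dist_eq_norm, h1, norm_smul, ← dist_eq_norm, hf x y]
    rw [Real.norm_eq_abs, abs_of_pos (inv_pos.mpr hr), ← mul_assoc, inv_mul_cancel₀ hr.ne',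
      one_mul, dist_eq_norm]
  have hg0 : g 0 = 0 := by simp [hg]
  have hnorm : ∀ x, ‖g x‖ = ‖x‖ := by
    intro x
    have := hgdist x 0
    rwa [hg0, dist_zero_right, dist_zero_right] at this
  have hinner : ∀ x y, ⟪g x, g y⟫ = ⟪x, y⟫ := by
    intro x y
    have h1 : ‖g x - g y‖ = ‖x - y‖ := by
      rw [← dist_eq_norm, ← dist_eq_norm, hgdist]
    have hx := norm_sub_sq_real (g x) (g y)
    have hy := norm_sub_sq_real x y
    rw [h1, hnorm, hnorm] at hx
    linarith
  have hadd : ∀ x y, g (x + y) = g x + g y := by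
    intro x y
    have h0 : ⟪g (x + y) - g x - g y, g (x + y) - g x - g y⟫ = 0 := by
      simp only [inner_sub_left, inner_sub_right, inner_add_left, inner_add_right, hinner]
      ring
    have h1 := inner_self_eq_zero.mp h0
    have h2 : g (x + y) - (g x + g y) = 0 := by rw [← h1]; abel
    exact sub_eq_zero.mp h2
  have hsmul : ∀ (t : ℝ) (x), g (t • x) = t • g x := by
    intro t x
    have h0 : ⟪g (t • x) - t • g x, g (t • x) - t • g x⟫ = 0 := by
      simp only [inner_sub_left, inner_sub_right, real_inner_smul_left, real_inner_smul_right,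
        hinner]
      ring
    have h1 := inner_self_eq_zero.mp h0
    exact sub_eq_zero.mp h1
  set gL : EuclideanSpace ℝ (Fin d) →ₗ[ℝ] EuclideanSpace ℝ (Fin d) :=
    { toFun := g, map_add' := hadd, map_smul' := hsmul } with hgL
  have hginj : Function.Injective gL := by
    intro x y h
    have h3 : g x = g y := h
    have h2 := hgdist x y
    rw [h3, dist_self] at h2
    exact dist_eq_zero.mp h2.symm
  have hgsurj : Function.Surjective gL := LinearMap.injective_iff_surjective.mp hginj
  intro w
  obtain ⟨z, hz⟩ := hgsurj (r⁻¹ • (w - f 0))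
  refine ⟨z, ?_⟩
  have hz' : g z = r⁻¹ • (w - f 0) := hz
  have h4 : f z - f 0 = w - f 0 := by
    have h5 := congrArg (fun v => r • v) hz'
    simpa [hg, smul_smul, mul_inv_cancel₀ hr.ne'] using h5
  exact sub_left_injective h4

lemma CantorAux.image_ball (f : EuclideanSpace ℝ (Fin d) → EuclideanSpace ℝ (Fin d))
    {r : ℝ} (hr : 0 < r) (hf : ∀ x y, dist (f x) (f y) = r * dist x y)
    (x : EuclideanSpace ℝ (Fin d)) (ρ : ℝ) :
    f '' ball x ρ = ball (f x) (r * ρ) := by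
  ext w
  constructor
  · rintro ⟨z, hz, rfl⟩
    rw [mem_ball] at hz ⊢
    rw [hf]
    exact (mul_lt_mul_iff_right₀ hr).mpr hz
  · intro hw
    obtain ⟨z, rfl⟩ := CantorAux.scaling_surjective f hr hf w
    refine ⟨z, ?_, rfl⟩
    rw [mem_ball] at hw ⊢
    rw [hf] at hw
    exact lt_of_mul_lt_mul_left hw hr.le

lemma CantorAux.diam_image_le (f : EuclideanSpace ℝ (Fin d) → EuclideanSpace ℝ (Fin d))
    {r : ℝ} (hr : 0 < r) (hf : ∀ x y, dist (f x) (f y) = r * dist x y)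
    {s : Set (EuclideanSpace ℝ (Fin d))} (hs : Bornology.IsBounded s) :
    Metric.diam (f '' s) ≤ r * Metric.diam s := by
  apply Metric.diam_le_of_forall_dist_le (mul_nonneg hr.le Metric.diam_nonneg)
  rintro u ⟨x, hx, rfl⟩ v ⟨y, hy, rfl⟩
  rw [hf]
  exact mul_le_mul_of_nonneg_left (Metric.dist_le_diam_of_mem hs hx hy) hr.le

lemma CantorAux.moranWord_append {n : ℕ → ℕ} {σ : List ℕ} {j : ℕ}
    (h : MoranWord n (σ ++ [j])) : MoranWord n σ ∧ 1 ≤ j ∧ j ≤ n (σ.length + 1) := by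
  have hlast := h σ.length (by simp)
  rw [List.getD_append_right _ _ _ _ le_rfl, Nat.sub_self, List.getD_cons_zero] at hlast
  refine ⟨?_, hlast.1, hlast.2⟩
  intro i hi
  have := h i (by simp only [List.length_append, List.length_singleton]; omega)
  rwa [List.getD_append _ _ _ _ hi] at this

lemma CantorAux.moranWord_snoc {n : ℕ → ℕ} {σ : List ℕ} {j : ℕ}
    (h : MoranWord n σ) (hj1 : 1 ≤ j) (hj2 : j ≤ n (σ.length + 1)) :
    MoranWord n (σ ++ [j]) := by
  intro i hi
  simp only [List.length_append, List.length_singleton] at hi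
  rcases lt_or_ge i σ.length with hlt | hge
  · rw [List.getD_append _ _ _ _ hlt]
    exact h i hlt
  · have hieq : i = σ.length := by omega
    subst hieq
    rw [List.getD_append_right _ _ _ _ le_rfl, Nat.sub_self, List.getD_cons_zero]
    exact ⟨hj1, hj2⟩

lemma CantorAux.exists_similarity_root {d : ℕ} {c : ℕ → ℝ} {n : ℕ → ℕ} {a : ℕ → ℝ}
    (S : CantorLikeStructure d c n a) :
    ∀ σ, MoranWord n σ → ∃ r : ℝ, 0 < r ∧
      ∃ f : EuclideanSpace ℝ (Fin d) → EuclideanSpace ℝ (Fin d),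
        (∀ x y, dist (f x) (f y) = r * dist x y) ∧ S.J σ = f '' S.J [] := by
  intro σ
  induction σ using List.reverseRecOn with
  | nil =>
    intro _
    exact ⟨1, one_pos, id, by simp, by simp⟩
  | append_singleton τ j ih =>
    intro h
    obtain ⟨hτ, hj1, hj2⟩ := CantorAux.moranWord_append h
    obtain ⟨r, hr, f, hfdist, hfJ⟩ := ih hτ
    obtain ⟨r', hr', f', hfdist', hfJ'⟩ := S.similar τ hτ j hj1 hj2
    refine ⟨r' * r, mul_pos hr' hr, f' ∘ f, fun x y => ?_, ?_⟩
    · simp only [Function.comp_apply, hfdist', hfdist, mul_assoc]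
    · rw [hfJ', hfJ, Set.image_comp]

end Aux

/-- For a Cantor-like set `E`, `sup_{k≥1} n_k < +∞`. -/
theorem cantorLike_sup_n_finite (d : ℕ) (hd : 1 ≤ d) (n : ℕ → ℕ) (c a : ℕ → ℝ)
    (hn : ∀ k, 1 ≤ k → 2 ≤ n k)
    (hc : ∀ k, 1 ≤ k → 0 < c k ∧ c k < 1)
    (hcstar : ∃ cs : ℝ, 0 < cs ∧ ∀ k, 1 ≤ k → cs ≤ c k)
    (ha : ∀ k, 1 ≤ k → 0 < a k)
    (hsum : Summable fun k => a (k + 1))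
    (S : CantorLikeStructure d c n a)
    (E : Set (EuclideanSpace ℝ (Fin d))) (hE : E = cantorLikeSet S) :
    ∃ M : ℕ, ∀ k, 1 ≤ k → n k ≤ M := by
  classical
  obtain ⟨cs, hcs0, hcs⟩ := hcstar
  obtain ⟨x0, hx0⟩ := S.interior_root
  obtain ⟨ρ, hρ0, hball⟩ := Metric.isOpen_iff.mp isOpen_interior x0 hx0
  have hballJ : ball x0 ρ ⊆ S.J [] := hball.trans interior_subset
  have hx0J : x0 ∈ S.J [] := hballJ (mem_ball_self hρ0)
  set D := Metric.diam (S.J []) with hD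
  -- a ball of radius `σ` inside a bounded set forces diameter `≥ σ/2`
  have half_le_diam : ∀ (s : Set (EuclideanSpace ℝ (Fin d))), Bornology.IsBounded s →
      ∀ (x : EuclideanSpace ℝ (Fin d)) (u : ℝ), 0 < u → ball x u ⊆ s →
        u / 2 ≤ Metric.diam s := by
    intro s hs x u hu hsub
    set v : EuclideanSpace ℝ (Fin d) := EuclideanSpace.single (⟨0, hd⟩ : Fin d) (1 : ℝ) with hv
    have hvnorm : ‖v‖ = 1 := by
      rw [hv, EuclideanSpace.norm_single, norm_one]
    have hdist : dist (x + (u / 2) • v) x = u / 2 := by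
      rw [dist_eq_norm, add_sub_cancel_left, norm_smul, hvnorm, mul_one, Real.norm_eq_abs,
        abs_of_pos (by linarith)]
    have hmem : x + (u / 2) • v ∈ s := hsub (by rw [mem_ball, hdist]; linarith)
    have hxmem : x ∈ s := hsub (mem_ball_self hu)
    calc u / 2 = dist (x + (u / 2) • v) x := hdist.symm
      _ ≤ Metric.diam s := Metric.dist_le_diam_of_mem hs hmem hxmem
  have hD0 : 0 < D := by
    have := half_le_diam (S.J []) S.bounded_root x0 ρ hρ0 hballJ
    linarith
  set V := volume (ball (0 : EuclideanSpace ℝ (Fin d)) 1) with hV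
  have hV0 : V ≠ 0 := (measure_ball_pos _ _ one_pos).ne'
  have hVt : V ≠ ⊤ := measure_ball_lt_top.ne
  set X : ℝ := (2 * D / (cs * ρ)) ^ d with hX
  set B : ℕ := ⌈X⌉₊ with hB
  -- the key counting bound, coming from a volume argument
  have key : ∀ σ : List ℕ, MoranWord n σ → a (σ.length + 1) ≤ 1 / 2 →
      n (σ.length + 1) ≤ B := by
    intro σ hσ haσ
    set m := σ.length with hm
    set N := n (m + 1) with hN
    have hcm := hc (m + 1) (by omega)
    have hcsm := hcs (m + 1) (by omega)
    have ham := ha (m + 1) (by omega)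
    obtain ⟨rσ, hrσ, fσ, hfσ, hJσ⟩ := CantorAux.exists_similarity_root S σ hσ
    have hJσbd : Bornology.IsBounded (S.J σ) := by
      rw [hJσ]
      have hlip : LipschitzWith rσ.toNNReal fσ := by
        apply LipschitzWith.of_dist_le_mul
        intro x y
        rw [hfσ]
        gcongr
        exact Real.le_coe_toNNReal rσ
      exact hlip.isBounded_image S.bounded_root
    set w := fσ x0 with hw
    have hwJ : w ∈ S.J σ := by rw [hJσ]; exact ⟨x0, hx0J, rfl⟩
    set R := Metric.diam (S.J σ) with hR
    have hballσ : ball w (rσ * ρ) ⊆ S.J σ := by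
      rw [hJσ, ← CantorAux.image_ball fσ hrσ hfσ x0 ρ]
      exact Set.image_mono hballJ
    have hR0 : 0 < R := by
      have := half_le_diam (S.J σ) hJσbd w (rσ * ρ) (by positivity) hballσ
      nlinarith
    set t := cs * R * ρ / (2 * D) with ht
    have ht0 : 0 < t := by positivity
    -- each child contains a ball of radius t
    have hchild : ∀ j, 1 ≤ j → j ≤ N → ∃ z, ball z t ⊆ interior (S.J (σ ++ [j])) := by
      intro j hj1 hj2
      have hτ : MoranWord n (σ ++ [j]) := CantorAux.moranWord_snoc hσ hj1 hj2
      obtain ⟨rj, hrj, fj, hfj, hJj⟩ := CantorAux.exists_similarity_root S (σ ++ [j]) hτ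
      have hdiamle : Metric.diam (S.J (σ ++ [j])) ≤ rj * D := by
        rw [hJj]
        exact CantorAux.diam_image_le fj hrj hfj S.bounded_root
      have hlb := S.ratio_lb σ hσ j hj1 hj2
      have h2 : cs * (1 / 2) ≤ c (m + 1) * (1 - a (m + 1)) := by
        nlinarith [hcm.1, hcm.2]
      have h1 : cs * (1 / 2) * R ≤ rj * D := by
        have h3 : cs * (1 / 2) * R ≤ c (m + 1) * (1 - a (m + 1)) * R :=
          mul_le_mul_of_nonneg_right h2 hR0.le
        exact h3.trans (hlb.trans hdiamle)
      have htle : t ≤ rj * ρ := by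
        rw [ht, div_le_iff₀ (by positivity)]
        nlinarith [mul_le_mul_of_nonneg_right h1 hρ0.le]
      refine ⟨fj x0, ?_⟩
      have hb1 : ball (fj x0) t ⊆ ball (fj x0) (rj * ρ) := ball_subset_ball htle
      have hb2 : ball (fj x0) (rj * ρ) = fj '' ball x0 ρ :=
        (CantorAux.image_ball fj hrj hfj x0 ρ).symm
      have hb3 : fj '' ball x0 ρ ⊆ S.J (σ ++ [j]) := by
        rw [hJj]
        exact Set.image_mono hballJ
      have hsub : ball (fj x0) t ⊆ S.J (σ ++ [j]) := by
        refine hb1.trans ?_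
        rw [hb2]
        exact hb3
      exact interior_maximal hsub isOpen_ball
    have hchild' : ∀ j : ℕ, ∃ z,
        1 ≤ j → j ≤ N → ball z t ⊆ interior (S.J (σ ++ [j])) := by
      intro j
      by_cases h1 : 1 ≤ j ∧ j ≤ N
      · obtain ⟨z, hz⟩ := hchild j h1.1 h1.2
        exact ⟨z, fun _ _ => hz⟩
      · exact ⟨0, fun hA hB' => absurd ⟨hA, hB'⟩ h1⟩
    choose ctr hctr using hchild'
    -- disjointness of the balls
    have hdisj : (Finset.Icc 1 N : Set ℕ).PairwiseDisjoint (fun j => ball (ctr j) t) := by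
      have key2 : ∀ i₁ i₂, 1 ≤ i₁ → i₁ < i₂ → i₂ ≤ N →
          Disjoint (ball (ctr i₁) t) (ball (ctr i₂) t) := by
        intro i₁ i₂ ha1 ha2 ha3
        have hdisj0 := S.disj σ hσ i₁ i₂ ha1 ha2 ha3
        have hs1 := hctr i₁ ha1 (le_of_lt (lt_of_lt_of_le ha2 ha3))
        have hs2 := hctr i₂ (by omega) ha3
        exact Set.disjoint_of_subset hs1 hs2 (Set.disjoint_iff_inter_eq_empty.mpr hdisj0)
      intro j₁ h₁ j₂ h₂ hne
      simp only [Finset.coe_Icc, Set.mem_Icc] at h₁ h₂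
      rcases lt_or_gt_of_ne hne with h | h
      · exact key2 j₁ j₂ h₁.1 h h₂.2
      · exact (key2 j₂ j₁ h₂.1 h h₁.2).symm
    have hsum_eq : volume (⋃ j ∈ Finset.Icc 1 N, ball (ctr j) t)
        = ∑ j ∈ Finset.Icc 1 N, volume (ball (ctr j) t) :=
      measure_biUnion_finset hdisj fun j _ => measurableSet_ball
    have hballvol : ∀ j : ℕ, volume (ball (ctr j) t) = ENNReal.ofReal (t ^ d) * V := by
      intro j
      rw [MeasureTheory.Measure.addHaar_ball_of_pos volume (ctr j) ht0,
        finrank_euclideanSpace_fin]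
    have hsubU : (⋃ j ∈ Finset.Icc 1 N, ball (ctr j) t) ⊆ closedBall w R := by
      intro y hy
      simp only [Set.mem_iUnion] at hy
      obtain ⟨j, hj, hyj⟩ := hy
      rw [Finset.mem_Icc] at hj
      have h1 := hctr j hj.1 hj.2 hyj
      have h2 : y ∈ S.J σ := S.subset σ hσ j hj.1 hj.2 (interior_subset h1)
      exact mem_closedBall.mpr (Metric.dist_le_diam_of_mem hJσbd h2 hwJ)
    have hcb : volume (closedBall w R) = ENNReal.ofReal (R ^ d) * V := by
      rw [MeasureTheory.Measure.addHaar_closedBall volume w hR0.le,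
        finrank_euclideanSpace_fin]
    have hineq : (N : ℝ≥0∞) * (ENNReal.ofReal (t ^ d) * V) ≤ ENNReal.ofReal (R ^ d) * V := by
      have hsum2 : ∑ j ∈ Finset.Icc 1 N, volume (ball (ctr j) t)
          = (N : ℝ≥0∞) * (ENNReal.ofReal (t ^ d) * V) := by
        rw [Finset.sum_congr rfl fun j _ => hballvol j, Finset.sum_const, Nat.card_Icc,
          Nat.add_sub_cancel, nsmul_eq_mul]
      calc (N : ℝ≥0∞) * (ENNReal.ofReal (t ^ d) * V)
          = volume (⋃ j ∈ Finset.Icc 1 N, ball (ctr j) t) := by rw [hsum_eq, hsum2]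
        _ ≤ volume (closedBall w R) := measure_mono hsubU
        _ = ENNReal.ofReal (R ^ d) * V := hcb
    have h2' : (N : ℝ≥0∞) * ENNReal.ofReal (t ^ d) ≤ ENNReal.ofReal (R ^ d) := by
      rw [← mul_assoc] at hineq
      exact (ENNReal.mul_le_mul_iff_left hV0 hVt).mp hineq
    have h3' : (N : ℝ) * t ^ d ≤ R ^ d := by
      rw [← ENNReal.ofReal_natCast, ← ENNReal.ofReal_mul (by positivity)] at h2'
      exact (ENNReal.ofReal_le_ofReal_iff (by positivity)).mp h2'
    have hXeq : R / t = 2 * D / (cs * ρ) := by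
      rw [ht]
      field_simp
    have h4' : (N : ℝ) ≤ X := by
      rw [hX, ← hXeq, div_pow, le_div_iff₀ (by positivity)]
      exact h3'
    have h5' : (N : ℝ) ≤ (B : ℝ) := h4'.trans (Nat.le_ceil X)
    exact_mod_cast h5'
  -- conclude using that `a k → 0`
  have htend : Tendsto (fun k => a (k + 1)) atTop (nhds 0) := hsum.tendsto_atTop_zero
  have hev : ∀ᶠ k in atTop, a (k + 1) < 1 / 2 :=
    htend.eventually_lt_const (by norm_num)
  obtain ⟨K, hK⟩ := eventually_atTop.mp hev
  refine ⟨max B ((Finset.range (K + 2)).sup n), fun k hk => ?_⟩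
  rcases lt_or_ge k (K + 2) with h | h
  · exact le_trans (Finset.le_sup (Finset.mem_range.mpr h)) (le_max_right _ _)
  · set σ := List.replicate (k - 1) 1 with hσdef
    have hσlen : σ.length = k - 1 := List.length_replicate
    have hσm : MoranWord n σ := by
      intro j hj
      rw [hσlen] at hj
      have hg : σ.getD j 0 = 1 := by
        rw [hσdef, List.getD_eq_getElem _ _ (by rw [List.length_replicate]; exact hj),
          List.getElem_replicate]
      rw [hg]
      exact ⟨le_rfl, le_trans (by norm_num) (hn (j + 1) (by omega))⟩
    have hkeq : σ.length + 1 = k := by rw [hσlen]; omega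
    have haK : a (σ.length + 1) ≤ 1 / 2 := by
      rw [hσlen]
      have h1 := hK (k - 1 - 1 + 1) (by omega)
      have h2 : k - 1 - 1 + 1 + 1 = k - 1 + 1 := by omega
      rw [h2] at h1
      exact h1.le
    have hres := key σ hσm haK
    rw [hkeq] at hres
    exact hres.trans (le_max_left _ _)
end
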